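/- arXiv:math/0403530 — 10 statements merged into one kernel-verified Lean document; each statement's English description precedes it below -/
import Mathlib

section
/- For every m with 1 ≤ m ≤ N and every j ≥ 0, the complete homogeneous symmetric polynomial h_j(x_1,...,x_m) is congruent to (-1)^j times the elementary symmetric polynomial e_j(x_{m+1},...,x_N) modulo the ideal of Z[x_1,...,x_N] generated by e_1(x_1,...,x_N), ..., e_N(x_1,...,x_N). -/
open MvPolynomial Finset

/-- The set of the first `j` variables among `x_0, ..., x_{n-1}`. -/
def fv (n j : ℕ) : Finset (Fin n) := Finset.univ.filter (fun i => (i : ℕ) < j)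

/-- Complete homogeneous symmetric polynomial of degree `m` in the variables indexed by `S`. -/
noncomputable def hh (R : Type*) [CommRing R] (n m : ℕ) (S : Finset (Fin n)) :
    MvPolynomial (Fin n) R :=
  ∑ s ∈ S.sym m, ((s : Multiset (Fin n)).map (X : Fin n → MvPolynomial (Fin n) R)).prod

/-- Elementary symmetric polynomial of degree `m` in the variables indexed by `S`. -/
noncomputable def ee (R : Type*) [CommRing R] (n m : ℕ) (S : Finset (Fin n)) :
    MvPolynomial (Fin n) R :=
  ∑ s ∈ S.powersetCard m, ∏ i ∈ s, X i
variable {n : ℕ}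

lemma ee_zero (S : Finset (Fin n)) : ee ℤ n 0 S = 1 := by
  simp [ee]

lemma ee_empty (k : ℕ) : ee ℤ n (k+1) (∅ : Finset (Fin n)) = 0 := by
  rw [ee, Finset.powersetCard_eq_empty.2 (by simp), Finset.sum_empty]

lemma hh_zero (S : Finset (Fin n)) : hh ℤ n 0 S = 1 := by
  rw [hh]
  rw [Finset.sym_zero, Finset.sum_singleton]
  rfl

lemma hh_empty (k : ℕ) : hh ℤ n (k+1) (∅ : Finset (Fin n)) = 0 := by
  simp [hh]

lemma ee_insert {a : Fin n} {S : Finset (Fin n)} (ha : a ∉ S) (k : ℕ) :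
    ee ℤ n (k+1) (insert a S) = ee ℤ n (k+1) S + X a * ee ℤ n k S := by
  unfold ee
  rw [Finset.powersetCard_succ_insert ha, Finset.sum_union, Finset.sum_image]
  · congr 1
    rw [Finset.mul_sum]
    refine Finset.sum_congr rfl fun t ht => ?_
    have hat : a ∉ t := fun h => ha ((Finset.mem_powersetCard.1 ht).1 h)
    rw [Finset.prod_insert hat]
  · intro t ht u hu e
    have hat : a ∉ t := fun h => ha ((Finset.mem_powersetCard.1 ht).1 h)
    have hau : a ∉ u := fun h => ha ((Finset.mem_powersetCard.1 hu).1 h)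
    have : t = (insert a t).erase a := by rw [Finset.erase_insert hat]
    rw [this, e, Finset.erase_insert hau]
  · rw [Finset.disjoint_left]
    rintro t ht hti
    rcases Finset.mem_image.1 hti with ⟨u, hu, rfl⟩
    exact ha ((Finset.mem_powersetCard.1 ht).1 (Finset.mem_insert_self a u))

lemma sym_insert_eq {α : Type*} [DecidableEq α] {a : α} {S : Finset α} (ha : a ∉ S) (k : ℕ) :
    (insert a S).sym (k+1) = S.sym (k+1) ∪ ((insert a S).sym k).image (Sym.cons a) := by
  ext m
  simp only [Finset.mem_union, Finset.mem_image, Finset.mem_sym_iff, Finset.mem_insert]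
  constructor
  · intro hm
    by_cases hA : a ∈ m
    · right
      refine ⟨m.erase a hA, ?_, Sym.cons_erase hA⟩
      intro b hb
      have : b ∈ m := Multiset.mem_of_mem_erase hb
      exact hm b this
    · left
      intro b hb
      rcases hm b hb with rfl | h'
      · exact absurd hb hA
      · exact h'
  · rintro (hm | ⟨m', hm', rfl⟩)
    · intro b hb; exact Or.inr (hm b hb)
    · intro b hb
      rcases Sym.mem_cons.1 hb with rfl | hb'
      · exact Or.inl rfl
      · exact hm' b hb'

lemma hh_insert {a : Fin n} {S : Finset (Fin n)} (ha : a ∉ S) (k : ℕ) :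
    hh ℤ n (k+1) (insert a S) = hh ℤ n (k+1) S + X a * hh ℤ n k (insert a S) := by
  unfold hh
  rw [sym_insert_eq ha, Finset.sum_union, Finset.sum_image]
  · congr 1
    rw [Finset.mul_sum]
    refine Finset.sum_congr rfl fun m hm => ?_
    rw [Sym.coe_cons, Multiset.map_cons, Multiset.prod_cons]
  · intro m _ m' _ e
    exact (Sym.cons_inj_right a m m').1 e
  · rw [Finset.disjoint_left]
    rintro m hm hmi
    rcases Finset.mem_image.1 hmi with ⟨u, _, rfl⟩
    exact ha (Finset.mem_sym_iff.1 hm a (Sym.mem_cons_self a u))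

lemma lemA (S : Finset (Fin n)) : ∀ k : ℕ,
    ∑ q ∈ Finset.range (k+1),
        (-1 : MvPolynomial (Fin n) ℤ)^q * (hh ℤ n (k-q) S * ee ℤ n q S)
      = if k = 0 then 1 else 0 := by
  induction S using Finset.induction_on with
  | empty =>
    intro k
    cases k with
    | zero => simp [hh_zero, ee_zero]
    | succ K =>
      rw [if_neg (Nat.succ_ne_zero K)]
      refine Finset.sum_eq_zero fun q hq => ?_
      cases q with
      | zero => simp [hh_empty]
      | succ q => simp [ee_empty]
  | @insert a S ha IH =>
    intro k
    cases k with
    | zero => simp [hh_zero, ee_zero]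
    | succ K =>
      rw [if_neg (Nat.succ_ne_zero K)]
      set P : ℕ → MvPolynomial (Fin n) ℤ := fun i => hh ℤ n i S with hP
      set P' : ℕ → MvPolynomial (Fin n) ℤ := fun i => hh ℤ n i (insert a S) with hP'
      set E : ℕ → MvPolynomial (Fin n) ℤ := fun i => ee ℤ n i S with hE
      set E' : ℕ → MvPolynomial (Fin n) ℤ := fun i => ee ℤ n i (insert a S) with hE'
      have hE's : ∀ i, E' (i+1) = E (i+1) + X a * E i := fun i => ee_insert ha i
      have hP's : ∀ i, P' (i+1) = P (i+1) + X a * P' i := fun i => hh_insert ha i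
      have hE'0 : E' 0 = 1 := ee_zero _
      have hE0 : E 0 = 1 := ee_zero _
      have hP'0 : P' 0 = 1 := hh_zero _
      have hP0 : P 0 = 1 := hh_zero _
      set T : MvPolynomial (Fin n) ℤ :=
        ∑ i ∈ Finset.range (K+1), (-1)^i * (P' (K-i) * E i) with hT
      -- step 1: peel q = 0
      rw [Finset.sum_range_succ']
      simp only [Nat.succ_sub_succ, pow_zero, one_mul, Nat.sub_zero, hE'0, mul_one]
      -- expand E' (i+1) in the sum
      have h1 : ∑ i ∈ Finset.range (K+1), (-1 : MvPolynomial (Fin n) ℤ)^(i+1) * (P' (K-i) * E' (i+1))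
          = (∑ i ∈ Finset.range (K+1), (-1)^(i+1) * (P' (K-i) * E (i+1)))
            + (- (X a * T)) := by
        rw [hT, Finset.mul_sum, ← Finset.sum_neg_distrib, ← Finset.sum_add_distrib]
        refine Finset.sum_congr rfl fun i hi => ?_
        rw [hE's i]
        ring
      -- peel last term of the first sum and expand P'
      have h2 : ∑ i ∈ Finset.range (K+1), (-1 : MvPolynomial (Fin n) ℤ)^(i+1) * (P' (K-i) * E (i+1))
          = (∑ i ∈ Finset.range K, (-1)^(i+1) * (P (K-i) * E (i+1)))
            + (-1)^(K+1) * (P 0 * E (K+1))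
            + X a * (T - P' K) := by
        rw [Finset.sum_range_succ]
        have hTp : T = (∑ i ∈ Finset.range K, (-1)^(i+1) * (P' (K-(i+1)) * E (i+1))) + P' K := by
          rw [hT, Finset.sum_range_succ']
          simp [hE0]
        have hsplit : ∑ i ∈ Finset.range K, (-1 : MvPolynomial (Fin n) ℤ)^(i+1) * (P' (K-i) * E (i+1))
            = (∑ i ∈ Finset.range K, (-1)^(i+1) * (P (K-i) * E (i+1)))
              + X a * ∑ i ∈ Finset.range K, (-1)^(i+1) * (P' (K-(i+1)) * E (i+1)) := by
          rw [Finset.mul_sum, ← Finset.sum_add_distrib]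
          refine Finset.sum_congr rfl fun i hi => ?_
          have hiK : i < K := Finset.mem_range.1 hi
          have e1 : K - i = (K - (i+1)) + 1 := by omega
          rw [e1, hP's]
          ring
        rw [hsplit, Nat.sub_self, hP'0, hP0, hTp]
        ring
      rw [h1, h2]
      -- the IH at K+1
      have hIH := IH (K+1)
      rw [if_neg (Nat.succ_ne_zero K), Finset.sum_range_succ'] at hIH
      simp only [Nat.succ_sub_succ, pow_zero, one_mul, Nat.sub_zero, hE0, mul_one] at hIH
      rw [Finset.sum_range_succ, Nat.sub_self] at hIH
      have h3 : hh ℤ n (K + 1) (insert a S) * ee ℤ n 0 (insert a S)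
          = P (K+1) + X a * P' K := by
        show P' (K+1) * E' 0 = _
        rw [hE'0, mul_one, hP's]
      rw [h3]
      have hIH' : (∑ x ∈ Finset.range K,
            (-1 : MvPolynomial (Fin n) ℤ)^(x+1) * (P (K-x) * E (x+1)))
          + (-1)^(K+1) * (P 0 * E (K+1)) + P (K+1) * E 0 = 0 := hIH
      rw [hE0, mul_one] at hIH'
      linear_combination hIH'

lemma lemB (T : Finset (Fin n)) (S : Finset (Fin n)) (hST : Disjoint S T) : ∀ k : ℕ,
    ee ℤ n k (S ∪ T) = ∑ b ∈ Finset.range (k+1), ee ℤ n (k-b) S * ee ℤ n b T := by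
  induction S using Finset.induction_on with
  | empty =>
    intro k
    rw [Finset.empty_union, Finset.sum_range_succ, Nat.sub_self, ee_zero, one_mul]
    have : ∀ b ∈ Finset.range k, ee ℤ n (k-b) (∅ : Finset (Fin n)) * ee ℤ n b T = 0 := by
      intro b hb
      have : k - b = (k - b - 1) + 1 := by
        have := Finset.mem_range.1 hb; omega
      rw [this, ee_empty, zero_mul]
    rw [Finset.sum_congr rfl this, Finset.sum_const, smul_zero, zero_add]
  | @insert a S ha IH =>
    intro k
    have haT : a ∉ T := Finset.disjoint_left.1 hST (Finset.mem_insert_self a S)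
    have hST' : Disjoint S T :=
      (Finset.disjoint_insert_left.1 hST).2
    have haST : a ∉ S ∪ T := by simp [ha, haT]
    have IH' := IH hST'
    cases k with
    | zero => simp [ee_zero]
    | succ K =>
      rw [Finset.insert_union, ee_insert haST, IH' (K+1), IH' K]
      rw [Finset.sum_range_succ (n := K+1), Nat.sub_self, ee_zero, one_mul]
      rw [Finset.sum_range_succ (f := fun b => ee ℤ n (K+1-b) (insert a S) * ee ℤ n b T),
        Nat.sub_self, ee_zero, one_mul]
      rw [Finset.mul_sum]
      have hcomb : (∑ b ∈ Finset.range (K+1), ee ℤ n (K+1-b) S * ee ℤ n b T)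
          + ∑ b ∈ Finset.range (K+1), X a * (ee ℤ n (K-b) S * ee ℤ n b T)
          = ∑ b ∈ Finset.range (K+1), ee ℤ n (K+1-b) (insert a S) * ee ℤ n b T := by
        rw [← Finset.sum_add_distrib]
        refine Finset.sum_congr rfl fun b hb => ?_
        have hbK : b < K + 1 := Finset.mem_range.1 hb
        have e1 : K + 1 - b = (K - b) + 1 := by omega
        rw [e1, ee_insert ha]
        ring
      linear_combination hcomb

lemma mainId (S : Finset (Fin n)) (j : ℕ) :
    ∑ k ∈ Finset.range (j+1),
        (-1 : MvPolynomial (Fin n) ℤ)^k * (hh ℤ n (j-k) S * ee ℤ n k Finset.univ)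
      = (-1)^j * ee ℤ n j Sᶜ := by
  have hU : S ∪ Sᶜ = (Finset.univ : Finset (Fin n)) := Finset.union_compl S
  have hdisj : Disjoint S Sᶜ := disjoint_compl_right
  have hee : ∀ k, ee ℤ n k Finset.univ
      = ∑ b ∈ Finset.range (k+1), ee ℤ n (k-b) S * ee ℤ n b Sᶜ := by
    intro k; rw [← hU]; exact lemB Sᶜ S hdisj k
  calc ∑ k ∈ Finset.range (j+1),
        (-1 : MvPolynomial (Fin n) ℤ)^k * (hh ℤ n (j-k) S * ee ℤ n k Finset.univ)
      = ∑ k ∈ Finset.range (j+1), ∑ b ∈ Finset.range (k+1),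
          (-1 : MvPolynomial (Fin n) ℤ)^k * (hh ℤ n (j-k) S * (ee ℤ n (k-b) S * ee ℤ n b Sᶜ)) := by
        refine Finset.sum_congr rfl fun k hk => ?_
        rw [hee k]
        simp only [Finset.mul_sum]
    _ = ∑ b ∈ Finset.range (j+1), ∑ k ∈ Finset.Ico b (j+1),
          (-1 : MvPolynomial (Fin n) ℤ)^k * (hh ℤ n (j-k) S * (ee ℤ n (k-b) S * ee ℤ n b Sᶜ)) := by
        simp only [Finset.range_eq_Ico]
        exact (Finset.sum_Ico_Ico_comm 0 (j+1)
          (fun b k => (-1 : MvPolynomial (Fin n) ℤ)^k *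
            (hh ℤ n (j-k) S * (ee ℤ n (k-b) S * ee ℤ n b Sᶜ)))).symm
    _ = ∑ b ∈ Finset.range (j+1),
          (-1 : MvPolynomial (Fin n) ℤ)^b * ee ℤ n b Sᶜ * (if j - b = 0 then 1 else 0) := by
        refine Finset.sum_congr rfl fun b hb => ?_
        have hbj : b < j + 1 := Finset.mem_range.1 hb
        rw [Finset.sum_Ico_eq_sum_range]
        have e2 : j + 1 - b = (j - b) + 1 := by omega
        rw [e2, ← lemA S (j-b), Finset.mul_sum]
        refine Finset.sum_congr rfl fun q hq => ?_
        have e3 : j - (b + q) = (j - b) - q := by omega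
        have e4 : b + q - b = q := by omega
        rw [e3, e4, pow_add]
        ring
    _ = (-1 : MvPolynomial (Fin n) ℤ)^j * ee ℤ n j Sᶜ := by
        rw [Finset.sum_eq_single j]
        · rw [Nat.sub_self, if_pos rfl, mul_one]
        · intro b hb hbj
          have : j - b ≠ 0 := by have := Finset.mem_range.1 hb; omega
          rw [if_neg this, mul_zero]
        · intro h; exact absurd (Finset.self_mem_range_succ j) h

/-- for `1 ≤ m ≤ N` and `j ≥ 0`,
`h_j(x_1,...,x_m) ≡ (-1)^j e_j(x_{m+1},...,x_N)` modulo the ideal generated by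
`e_1(x_1,...,x_N), ..., e_N(x_1,...,x_N)`. -/
theorem stmt0 (N m : ℕ) (hm1 : 1 ≤ m) (hmN : m ≤ N) (j : ℕ) :
    hh ℤ N j (fv N m) - (-1 : ℤ) ^ j • ee ℤ N j ((fv N m)ᶜ) ∈
      Ideal.span (Set.range fun i : Fin N => ee ℤ N ((i : ℕ) + 1) Finset.univ) := by
  set S := fv N m
  set I := Ideal.span (Set.range fun i : Fin N => ee ℤ N ((i : ℕ) + 1) Finset.univ) with hI
  have key := mainId S j
  have hsm : (-1 : ℤ) ^ j • ee ℤ N j Sᶜ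
      = (-1 : MvPolynomial (Fin N) ℤ)^j * ee ℤ N j Sᶜ := by
    rw [zsmul_eq_mul]
    push_cast
    ring
  rw [hsm, ← key, Finset.sum_range_succ']
  simp only [pow_zero, one_mul, Nat.sub_zero, ee_zero, mul_one]
  have : hh ℤ N j S - (∑ i ∈ Finset.range j,
      (-1 : MvPolynomial (Fin N) ℤ)^(i+1) * (hh ℤ N (j-(i+1)) S * ee ℤ N (i+1) Finset.univ)
        + hh ℤ N j S)
      = - ∑ i ∈ Finset.range j,
      (-1 : MvPolynomial (Fin N) ℤ)^(i+1) * (hh ℤ N (j-(i+1)) S * ee ℤ N (i+1) Finset.univ) := by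
    ring
  rw [this]
  refine neg_mem (Ideal.sum_mem _ fun i hi => ?_)
  by_cases hiN : i + 1 ≤ N
  · have hgen : ee ℤ N (i+1) Finset.univ ∈ I := by
      rw [hI]
      refine Ideal.subset_span ⟨⟨i, by omega⟩, rfl⟩
    rw [show (-1 : MvPolynomial (Fin N) ℤ)^(i+1) * (hh ℤ N (j-(i+1)) S * ee ℤ N (i+1) Finset.univ)
        = ((-1)^(i+1) * hh ℤ N (j-(i+1)) S) * ee ℤ N (i+1) Finset.univ from by ring]
    exact Ideal.mul_mem_left _ _ hgen
  · have hz : ee ℤ N (i+1) (Finset.univ : Finset (Fin N)) = 0 := by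
      rw [ee, Finset.powersetCard_eq_empty.2 (by simp; omega), Finset.sum_empty]
    rw [hz, mul_zero, mul_zero]
    exact zero_mem _
end

section
/- If λ_i = λ_{i+1} = ... = λ_j for some i < j, then the ideal I_λ of Z[x_1,...,x_n] is invariant under all permutations of the variables x_i, x_{i+1}, ..., x_j. -/
open MvPolynomial Finset

lemma fv_succ {n k : ℕ} (hk : k < n) : fv n (k + 1) = insert ⟨k, hk⟩ (fv n k) := by
  ext a
  simp only [fv, Finset.mem_filter, Finset.mem_univ, true_and, Finset.mem_insert, Fin.ext_iff]
  omega

lemma mk_not_mem_fv {n k : ℕ} (hk : k < n) : (⟨k, hk⟩ : Fin n) ∉ fv n k := by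
  simp [fv]

/-- Recurrence for complete homogeneous polynomials. -/
lemma hh_succ {n : ℕ} (m : ℕ) (a : Fin n) (S : Finset (Fin n)) (ha : a ∉ S) :
    hh ℤ n (m + 1) (insert a S) = hh ℤ n (m + 1) S + X a * hh ℤ n m (insert a S) := by
  unfold hh
  have hdisj : Disjoint (S.sym (m + 1)) (((insert a S).sym m).image (Sym.cons a)) := by
    rw [Finset.disjoint_right]
    rintro s hs hs'
    obtain ⟨t, _, rfl⟩ := Finset.mem_image.1 hs
    exact ha (Finset.mem_sym_iff.1 hs' a (Sym.mem_cons_self a t))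
  have hsplit : (insert a S).sym (m + 1)
      = S.sym (m + 1) ∪ ((insert a S).sym m).image (Sym.cons a) := by
    ext s
    simp only [Finset.mem_union, Finset.mem_image, Finset.mem_sym_iff, Finset.mem_insert]
    constructor
    · intro h
      by_cases hma : a ∈ s
      · right
        refine ⟨s.erase a hma, ?_, Sym.cons_erase hma⟩
        intro b hb
        have hb' : b ∈ s := by
          have : b ∈ ((s.erase a hma : Sym (Fin n) m) : Multiset (Fin n)) := hb
          rw [Sym.coe_erase] at this
          exact Multiset.mem_of_mem_erase this
        exact h b hb'
      · left
        intro b hb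
        exact (h b hb).resolve_left (fun e => hma (e ▸ hb))
    · rintro (h | ⟨t, ht, rfl⟩)
      · exact fun b hb => Or.inr (h b hb)
      · intro b hb
        rcases Sym.mem_cons.1 hb with rfl | hb
        · exact Or.inl rfl
        · exact ht b hb
  rw [hsplit, Finset.sum_union hdisj]
  congr 1
  rw [Finset.sum_image (fun x _ y _ h => (Sym.cons_inj_right a x y).1 h), Finset.mul_sum]
  refine Finset.sum_congr rfl fun t _ => ?_
  rw [Sym.coe_cons, Multiset.map_cons, Multiset.prod_cons]

/-- `hh` is invariant under a permutation stabilizing the variable set. -/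
lemma hh_rename {n : ℕ} (m : ℕ) (S : Finset (Fin n)) (σ : Equiv.Perm (Fin n))
    (hS : S.image σ = S) :
    rename (σ : Fin n → Fin n) (hh ℤ n m S) = hh ℤ n m S := by
  have hmem : ∀ a ∈ S, σ a ∈ S := fun a ha => hS ▸ Finset.mem_image_of_mem σ ha
  have hmem' : ∀ a ∈ S, σ.symm a ∈ S := by
    intro a ha
    rw [← hS] at ha
    obtain ⟨b, hb, rfl⟩ := Finset.mem_image.1 ha
    simpa using hb
  unfold hh
  rw [map_sum]
  refine Finset.sum_nbij' (i := fun s => s.map σ) (j := fun s => s.map σ.symm)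
    ?_ ?_ ?_ ?_ ?_
  · intro s hs
    rw [Finset.mem_sym_iff] at hs ⊢
    intro b hb
    obtain ⟨c, hc, rfl⟩ := Sym.mem_map.1 hb
    exact hmem c (hs c hc)
  · intro s hs
    rw [Finset.mem_sym_iff] at hs ⊢
    intro b hb
    obtain ⟨c, hc, rfl⟩ := Sym.mem_map.1 hb
    exact hmem' c (hs c hc)
  · intro s _
    simp [Sym.map_map]
  · intro s _
    simp [Sym.map_map]
  · intro s _
    rw [map_multiset_prod, Multiset.map_map, Sym.coe_map, Multiset.map_map]
    congr 1
    refine Multiset.map_congr rfl fun x _ => ?_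
    simp

/-- A permutation fixing everything outside `[i,j]` stabilizes `fv n k`
when `k ≤ i` or `j < k`. -/
lemma sigma_fv {n : ℕ} (i j : Fin n) (σ : Equiv.Perm (Fin n))
    (hfix : ∀ l : Fin n, (l < i ∨ j < l) → σ l = l) (k : ℕ)
    (hk : k ≤ (i : ℕ) ∨ (j : ℕ) < k) : (fv n k).image σ = fv n k := by
  have hmaps : ∀ a : Fin n, (a : ℕ) < k → ((σ a : Fin n) : ℕ) < k := by
    intro a hak
    rcases hk with hk | hk
    · have : a < i := Fin.lt_def.2 (lt_of_lt_of_le hak hk)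
      rw [hfix a (Or.inl this)]; exact hak
    · by_cases hcase : a < i ∨ j < a
      · rw [hfix a hcase]; exact hak
      · by_cases hs : σ a < i ∨ j < σ a
        · have h1 : σ (σ a) = σ a := hfix (σ a) hs
          have h2 : σ a = a := σ.injective h1
          rw [h2]; exact hak
        · push_neg at hs
          exact lt_of_le_of_lt (Fin.le_def.1 hs.2) hk
  have hsub : (fv n k).image σ ⊆ fv n k := by
    intro b hb
    obtain ⟨a, ha, rfl⟩ := Finset.mem_image.1 hb
    simp only [fv, Finset.mem_filter, Finset.mem_univ, true_and] at ha ⊢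
    exact hmaps a ha
  exact Finset.eq_of_subset_of_card_le hsub
    (le_of_eq (Finset.card_image_of_injective _ σ.injective).symm)

/-- if `λ_i = λ_{i+1} = ... = λ_j` for some `i < j`, then `I_λ` is invariant
under any permutation of the variables `x_i, ..., x_j` (i.e. any permutation fixing the
variables outside `[i,j]`). -/
theorem stmt4 (n : ℕ) (lam : Fin n → ℕ) (hmono : Monotone lam)
    (hge : ∀ l : Fin n, (l : ℕ) + 1 ≤ lam l)
    (i j : Fin n) (hij : i < j) (hconst : ∀ l : Fin n, i ≤ l → l ≤ j → lam l = lam i)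
    (σ : Equiv.Perm (Fin n)) (hfix : ∀ l : Fin n, (l < i ∨ j < l) → σ l = l)
    (I : Ideal (MvPolynomial (Fin n) ℤ))
    (hI : I = Ideal.span
      (Set.range fun l : Fin n => hh ℤ n (lam l - (l : ℕ)) (fv n ((l : ℕ) + 1)))) :
    Ideal.map (rename (σ : Fin n → Fin n) :
      MvPolynomial (Fin n) ℤ →ₐ[ℤ] MvPolynomial (Fin n) ℤ) I = I := by
  classical
  subst hI
  set c := lam i with hc
  have hjn : (j : ℕ) < n := j.isLt
  have hcj : (j : ℕ) + 1 ≤ c := by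
    have h1 := hge j
    have h2 := hconst j (le_of_lt hij) le_rfl
    omega
  set G : Fin n → MvPolynomial (Fin n) ℤ :=
    fun l : Fin n => hh ℤ n (lam l - (l : ℕ)) (fv n ((l : ℕ) + 1)) with hG
  set G' : Fin n → MvPolynomial (Fin n) ℤ := fun l : Fin n =>
    if i ≤ l ∧ l ≤ j then hh ℤ n (c - (l : ℕ)) (fv n ((j : ℕ) + 1)) else G l with hG'
  -- Lemma B : the `hh (c - l) (fv n (l + d + 1))` all lie in the ideal.
  have hB : ∀ d l : ℕ, (i : ℕ) ≤ l → l + d ≤ (j : ℕ) →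
      hh ℤ n (c - l) (fv n (l + d + 1)) ∈ Ideal.span (Set.range G) := by
    intro d
    induction d with
    | zero =>
      intro l hl hlj
      have hln : l < n := by omega
      have hlam : lam ⟨l, hln⟩ = c :=
        hconst ⟨l, hln⟩ (Fin.le_def.2 hl) (Fin.le_def.2 (by simpa using hlj))
      refine Ideal.subset_span (Set.mem_range.2 ⟨⟨l, hln⟩, ?_⟩)
      simp [hG, hlam]
    | succ d ih =>
      intro l hl hlj
      have hkn : l + d + 1 < n := by omega
      have hcl : c - (l + 1) + 1 = c - l := by omega
      have hrec := hh_succ (c - (l + 1)) ⟨l + d + 1, hkn⟩ (fv n (l + d + 1)) (mk_not_mem_fv hkn)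
      rw [hcl, ← fv_succ hkn] at hrec
      rw [show l + (d + 1) + 1 = (l + d + 1) + 1 by ring, hrec]
      apply Ideal.add_mem
      · exact ih l hl (by omega)
      · apply Ideal.mul_mem_left
        have h2 := ih (l + 1) (by omega) (by omega)
        rw [show l + 1 + d + 1 = l + d + 1 + 1 by ring] at h2
        exact h2
  -- Lemma C : the original generators lie in the span of the modified ones.
  have hC : ∀ d l : ℕ, (i : ℕ) ≤ l → l + d ≤ (j : ℕ) →
      hh ℤ n (c - l) (fv n ((j : ℕ) + 1 - d)) ∈ Ideal.span (Set.range G') := by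
    intro d
    induction d with
    | zero =>
      intro l hl hlj
      have hln : l < n := by omega
      refine Ideal.subset_span (Set.mem_range.2 ⟨⟨l, hln⟩, ?_⟩)
      have h1 : i ≤ (⟨l, hln⟩ : Fin n) := Fin.le_def.2 hl
      have h2 : (⟨l, hln⟩ : Fin n) ≤ j := Fin.le_def.2 (by simpa using hlj)
      have h3 : i ≤ (⟨l, hln⟩ : Fin n) ∧ (⟨l, hln⟩ : Fin n) ≤ j := ⟨h1, h2⟩
      simp only [hG']
      rw [if_pos h3]
      norm_num
    | succ d ih =>
      intro l hl hlj
      set k := (j : ℕ) - d with hk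
      have hkn : k < n := by omega
      have hcl : c - (l + 1) + 1 = c - l := by omega
      have hrec := hh_succ (c - (l + 1)) ⟨k, hkn⟩ (fv n k) (mk_not_mem_fv hkn)
      rw [hcl, ← fv_succ hkn] at hrec
      have hA := ih l hl (by omega)
      have hBt := ih (l + 1) (by omega) (by omega)
      have ej : (j : ℕ) + 1 - d = k + 1 := by omega
      rw [ej] at hA hBt
      have egoal : (j : ℕ) + 1 - (d + 1) = k := by omega
      rw [egoal]
      have hsub : hh ℤ n (c - l) (fv n k) =
          hh ℤ n (c - l) (fv n (k + 1))
            - X ⟨k, hkn⟩ * hh ℤ n (c - (l + 1)) (fv n (k + 1)) := by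
        rw [hrec]; ring
      rw [hsub]
      exact Ideal.sub_mem _ hA (Ideal.mul_mem_left _ _ hBt)
  -- span equality
  have hIJ : Ideal.span (Set.range G) = Ideal.span (Set.range G') := by
    apply le_antisymm
    · rw [Ideal.span_le]
      rintro _ ⟨l, rfl⟩
      rw [SetLike.mem_coe]
      by_cases hl : i ≤ l ∧ l ≤ j
      · have hlam : lam l = c := hconst l hl.1 hl.2
        have hd := hC ((j : ℕ) - (l : ℕ)) (l : ℕ) (Fin.le_def.1 hl.1)
          (by have := Fin.le_def.1 hl.2; omega)
        rw [show (j : ℕ) + 1 - ((j : ℕ) - (l : ℕ)) = (l : ℕ) + 1 by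
          have := Fin.le_def.1 hl.2; omega] at hd
        simpa [hG, hlam] using hd
      · exact Ideal.subset_span ⟨l, by simp [hG', if_neg hl]⟩
    · rw [Ideal.span_le]
      rintro _ ⟨l, rfl⟩
      rw [SetLike.mem_coe]
      by_cases hl : i ≤ l ∧ l ≤ j
      · simp only [hG', if_pos hl]
        have hd := hB ((j : ℕ) - (l : ℕ)) (l : ℕ) (Fin.le_def.1 hl.1)
          (by have := Fin.le_def.1 hl.2; omega)
        rw [show (l : ℕ) + ((j : ℕ) - (l : ℕ)) + 1 = (j : ℕ) + 1 by
          have := Fin.le_def.1 hl.2; omega] at hd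
        exact hd
      · simp only [hG', if_neg hl]
        exact Ideal.subset_span ⟨l, rfl⟩
  -- each modified generator is fixed by the renaming
  have hfixed : ∀ x ∈ Set.range G', rename (σ : Fin n → Fin n) x = x := by
    rintro _ ⟨l, rfl⟩
    by_cases hl : i ≤ l ∧ l ≤ j
    · simp only [hG', if_pos hl]
      exact hh_rename _ _ σ (sigma_fv i j σ hfix _ (Or.inr (Nat.lt_succ_self _)))
    · simp only [hG', if_neg hl]
      refine hh_rename _ _ σ (sigma_fv i j σ hfix _ ?_)
      by_cases hli : l < i
      · exact Or.inl (Fin.lt_def.1 hli)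
      · push_neg at hli hl
        have := Fin.lt_def.1 (hl hli)
        omega
  rw [hIJ, Ideal.map_span]
  congr 1
  calc (rename (σ : Fin n → Fin n) : MvPolynomial (Fin n) ℤ →ₐ[ℤ] MvPolynomial (Fin n) ℤ)
        '' Set.range G' = id '' Set.range G' := Set.image_congr hfixed
    _ = Set.range G' := Set.image_id _
end

section
/- Let n ≥ 1 and let f(x) = Σ_{i=1}^n a_i x_i be a C-linear form on C^n, and let α ∈ C be nonzero. Suppose f(v)^n = α for every vector v ∈ C^n whose coordinates are a permutation of the n distinct n-th roots of unity. Then there exists an index i such that f lies in the two-dimensional space C·x_i + C·(x_1+...+x_n); equivalently, at least n−1 of the coefficients a_1,...,a_n are equal. -/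
open MvPolynomial Finset

/-!
Write `S(σ) = ∑ aᵢ ζ^σ(i)` (`permSum a ζ σ`). All `S(σ)` have the same modulus `r > 0`, so
`‖S(τ) - S(σ)‖ ≤ 2r`, and any two of them differ by a factor that is an `n`-th root of unity.
Composing `σ` with a transposition `(i j)` changes `S` by `(aᵢ - aⱼ)(ζ^d - 1)` with `ζ^d ≠ 1` at
our choice, and also by `S(σ)(ω - 1)` for a root of unity `ω`; so multiplication by
`‖aᵢ - aⱼ‖ / r` maps the finite set of chord lengths `‖ω - 1‖` into itself, which forces
`‖aᵢ - aⱼ‖ = r` whenever `aᵢ ≠ aⱼ`.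

If fewer than `n - 1` coefficients agree, then either three distinct values occur, and they form an
equilateral triangle of side `r`, or two distinct values each occur twice. A 3-cycle, resp. a double
transposition, placed on suitably chosen roots of unity then changes `S` by more than `2r`.
-/

open Complex
open Equiv hiding conj
open scoped ComplexConjugate
open scoped Real

theorem IsPrimitiveRoot.exists_perm_pow_eq {R : Type*} [CommRing R] [IsDomain R] {n k : ℕ}
    [NeZero n] {ζ η : R} (hζ : IsPrimitiveRoot ζ n) (hη : IsPrimitiveRoot η n)
    {p : Fin k → Fin n} (hp : Function.Injective p) {q : Fin k → ℕ}
    (hq : Function.Injective q) (hqn : ∀ t, q t < n) :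
    ∃ σ : Perm (Fin n), ∀ t, ζ ^ (σ (p t) : ℕ) = η ^ q t := by
  choose e he hζe using fun t => hζ.eq_pow_of_pow_eq_one (ξ := η ^ q t)
    (by rw [← pow_mul, mul_comm, pow_mul, hη.pow_eq_one, one_pow])
  obtain ⟨σ, hσ⟩ := Perm.exists_extending_pair p (fun t => (⟨e t, he t⟩ : Fin n)) hp
    fun s t hst => hq (hη.pow_inj (hqn s) (hqn t) (by rw [← hζe, ← hζe, Fin.mk.inj hst]))
  exact ⟨σ, fun t => by rw [hσ t]; exact hζe t⟩

namespace RootsOfUnityForm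

theorem norm_exp_mul_I_sub_one (x : ℝ) : ‖exp (x * I) - 1‖ = 2 * |Real.sin (x / 2)| := by
  rw [mul_comm, norm_exp_I_mul_ofReal_sub_one, Real.norm_eq_abs, abs_mul, abs_two]

theorem norm_exp_mul_I_add_one (x : ℝ) : ‖exp (x * I) + 1‖ = 2 * |Real.cos (x / 2)| := by
  have h : exp (↑(x + π) * I) - 1 = -(exp (x * I) + 1) := by
    rw [ofReal_add, add_mul, exp_add, exp_pi_mul_I]; ring
  rw [← norm_neg, ← h, norm_exp_mul_I_sub_one, add_div, Real.sin_add_pi_div_two]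

theorem exp_pi_div_three_mul_I_sq_sub_add_one :
    exp (↑(π / 3) * I) ^ 2 - exp (↑(π / 3) * I) + 1 = 0 := by
  have h3 : (√3 : ℂ) ^ 2 = 3 := by exact_mod_cast Real.sq_sqrt (by norm_num : (0 : ℝ) ≤ 3)
  rw [exp_mul_I, ← ofReal_cos, ← ofReal_sin, Real.cos_pi_div_three, Real.sin_pi_div_three]
  push_cast
  linear_combination (-1 / 4 : ℂ) * h3 + ((√3 : ℂ) ^ 2 / 4) * I_sq

theorem two_lt_norm_exp_sub_one_mul_exp_add_exp {ψ : ℝ} (h₁ : π / 3 < ψ) (h₂ : ψ ≤ 2 * π / 3) :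
    2 < ‖(exp (ψ * I) - 1) * (exp (ψ * I) + exp (↑(π / 3) * I))‖ := by
  have hsum : exp (ψ * I) + exp (↑(π / 3) * I) =
      exp (↑(π / 3) * I) * (exp (↑(ψ - π / 3) * I) + 1) := by
    rw [mul_add, ← exp_add, ofReal_sub]; ring_nf
  have hsin : 0 < Real.sin (ψ / 2) := Real.sin_pos_of_pos_of_lt_pi (by linarith) (by linarith)
  have hcos : 0 < Real.cos ((ψ - π / 3) / 2) := Real.cos_pos_of_mem_Ioo ⟨by linarith, by linarith⟩
  have hsin' : Real.sin (π / 6) < Real.sin (ψ - π / 6) :=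
    Real.sin_lt_sin_of_lt_of_le_pi_div_two (by linarith) (by linarith) (by linarith)
  have hprod : 2 * Real.sin (ψ / 2) * Real.cos ((ψ - π / 3) / 2) =
      Real.sin (π / 6) + Real.sin (ψ - π / 6) := by
    rw [Real.two_mul_sin_mul_cos]; ring_nf
  rw [norm_mul, hsum, norm_mul, norm_exp_ofReal_mul_I, one_mul, norm_exp_mul_I_sub_one,
    norm_exp_mul_I_add_one, abs_of_pos hsin, abs_of_pos hcos]
  rw [Real.sin_pi_div_six] at hprod hsin'
  nlinarith

theorem two_lt_norm_exp_sub_one_mul_exp_add_one {x y : ℝ} (hx₁ : π / 2 < x) (hx₂ : x ≤ π)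
    (hy₁ : 0 ≤ y) (hy₂ : y ≤ π / 2) : 2 < ‖(exp (x * I) - 1) * (exp (y * I) + 1)‖ := by
  have hsin : √2 / 2 < Real.sin (x / 2) := by
    rw [← Real.sin_pi_div_four]
    exact Real.sin_lt_sin_of_lt_of_le_pi_div_two (by linarith) (by linarith) (by linarith)
  have hcos : √2 / 2 ≤ Real.cos (y / 2) := by
    rw [← Real.cos_pi_div_four]
    exact Real.cos_le_cos_of_nonneg_of_le_pi (by linarith) (by linarith) (by linarith)
  have h2 : √2 ^ 2 = 2 := Real.sq_sqrt (by norm_num)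
  have h2pos : 0 < √2 := by positivity
  rw [norm_mul, norm_exp_mul_I_sub_one, norm_exp_mul_I_add_one,
    abs_of_pos ((half_pos h2pos).trans hsin), abs_of_pos ((half_pos h2pos).trans_le hcos)]
  nlinarith

theorem exp_two_pi_I_div_pow (n m : ℕ) : exp (2 * π * I / n) ^ m = exp (↑(2 * π * m / n) * I) := by
  rw [← exp_nat_mul]; congr 1; push_cast; ring

theorem eq_exp_pi_div_three_mul_or {u v : ℂ} (h₁ : ‖u‖ = ‖v‖) (h₂ : ‖u - v‖ = ‖u‖) :
    u = exp (↑(π / 3) * I) * v ∨ v = exp (↑(π / 3) * I) * u := by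
  set ε := exp (↑(π / 3) * I)
  have hε := exp_pi_div_three_mul_I_sq_sub_add_one
  rcases eq_or_ne u 0 with rfl | hu
  · rw [norm_zero, eq_comm, norm_eq_zero] at h₁
    simp [h₁]
  have hc₁ : u * conj u = v * conj v := by
    rw [mul_conj, mul_conj, normSq_eq_norm_sq, normSq_eq_norm_sq, h₁]
  have hc₂ : u * conj u = (u - v) * conj (u - v) := by
    rw [mul_conj, mul_conj, normSq_eq_norm_sq, normSq_eq_norm_sq, h₂]
  have hquad : u ^ 2 - u * v + v ^ 2 = 0 := by
    apply mul_left_cancel₀ (by simpa using hu : conj u ≠ 0)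
    rw [map_sub] at hc₂
    linear_combination (u - v) * hc₁ + v * hc₂
  have hfac : (u - ε * v) * (ε * u - v) = 0 := by linear_combination ε * hquad - u * v * hε
  rcases mul_eq_zero.1 hfac with h | h
  · exact Or.inl (sub_eq_zero.1 h)
  · exact Or.inr (sub_eq_zero.1 h).symm

theorem eq_of_forall_exists_mul_eq {K : Type*} [Field K] [LinearOrder K] [IsStrictOrderedRing K]
    {s : Finset K} (hs : ∀ c ∈ s, 0 < c) (hne : s.Nonempty) {x r : K} (hr : 0 ≤ r)
    (h : ∀ c ∈ s, ∃ c' ∈ s, x * c = r * c') : x = r := by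
  obtain ⟨c₁, hc₁, h₁⟩ := h _ (s.min'_mem hne)
  obtain ⟨c₂, hc₂, h₂⟩ := h _ (s.max'_mem hne)
  have hmin := mul_le_mul_of_nonneg_left (s.min'_le c₁ hc₁) hr
  have hmax := mul_le_mul_of_nonneg_left (s.le_max' c₂ hc₂) hr
  exact le_antisymm (le_of_mul_le_mul_right (h₂ ▸ hmax) (hs _ (s.max'_mem hne)))
    (le_of_mul_le_mul_right (h₁ ▸ hmin) (hs _ (s.min'_mem hne)))

theorem exists_three_ne_or_two_pairs {ι β : Type*} [Nonempty ι] {a : ι → β}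
    (h : ∀ i c, ∃ j ≠ i, a j ≠ c) :
    (∃ i j k, a i ≠ a j ∧ a i ≠ a k ∧ a j ≠ a k) ∨
      ∃ i j k l, i ≠ j ∧ k ≠ l ∧ a i = a j ∧ a k = a l ∧ a i ≠ a k := by
  obtain ⟨i⟩ := ‹Nonempty ι›
  obtain ⟨p, -, hp⟩ := h i (a i)
  obtain ⟨j, hj, hja⟩ := h p (a i)
  obtain ⟨l, hl, hla⟩ := h i (a p)
  by_cases hjp : a j = a p
  · by_cases hli : a l = a i
    · exact Or.inr ⟨j, p, l, i, hj, hl, hjp, hli, hli ▸ hja⟩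
    · exact Or.inl ⟨p, i, l, hp, Ne.symm hla, Ne.symm hli⟩
  · exact Or.inl ⟨p, i, j, hp, Ne.symm hjp, Ne.symm hja⟩

variable {n : ℕ}

noncomputable def permSum (a : Fin n → ℂ) (ζ : ℂ) (σ : Perm (Fin n)) : ℂ :=
  ∑ i, a i * ζ ^ (σ i : ℕ)

theorem permSum_mul_swap_sub (a : Fin n → ℂ) (ζ : ℂ) (σ : Perm (Fin n)) {i j : Fin n}
    (hij : i ≠ j) :
    permSum a ζ (σ * swap i j) - permSum a ζ σ = (a i - a j) * (ζ ^ (σ j : ℕ) - ζ ^ (σ i : ℕ)) := by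
  rw [permSum, permSum, ← Finset.sum_sub_distrib, Fintype.sum_eq_add i j hij]
  · simp only [Perm.mul_apply, swap_apply_left, swap_apply_right]; ring
  · rintro m ⟨hi, hj⟩
    rw [Perm.mul_apply, swap_apply_of_ne_of_ne hi hj, sub_self]

section
variable {a : Fin n → ℂ} {ζ α : ℂ} (hα : α ≠ 0) (h : ∀ σ, permSum a ζ σ ^ n = α)
include h

include hα in
theorem permSum_ne_zero (hn : n ≠ 0) (σ : Perm (Fin n)) : permSum a ζ σ ≠ 0 := fun h0 =>
  hα (by rw [← h σ, h0, zero_pow hn])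

theorem norm_permSum_eq (hn : n ≠ 0) (σ τ : Perm (Fin n)) :
    ‖permSum a ζ σ‖ = ‖permSum a ζ τ‖ :=
  (pow_left_inj₀ (norm_nonneg _) (norm_nonneg _) hn).1 (by rw [← norm_pow, ← norm_pow, h, h])

theorem norm_permSum_sub_le (hn : n ≠ 0) (σ τ : Perm (Fin n)) :
    ‖permSum a ζ τ - permSum a ζ σ‖ ≤ 2 * ‖permSum a ζ σ‖ := by
  have := norm_sub_le (permSum a ζ τ) (permSum a ζ σ)
  rw [norm_permSum_eq h hn τ σ] at this
  linarith

include hα in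
theorem exists_permSum_eq_pow_mul [NeZero n] (hζ : IsPrimitiveRoot ζ n) (σ τ : Perm (Fin n)) :
    ∃ e < n, permSum a ζ τ = ζ ^ e * permSum a ζ σ := by
  have hσ := permSum_ne_zero hα h (NeZero.ne n) σ
  obtain ⟨e, he, hζe⟩ := hζ.eq_pow_of_pow_eq_one (ξ := permSum a ζ τ / permSum a ζ σ)
    (by rw [div_pow, h, h, div_self hα])
  exact ⟨e, he, by rw [hζe, div_mul_cancel₀ _ hσ]⟩

theorem norm_le_two_of_permSum_sub_eq_mul (hn : n ≠ 0) {σ τ : Perm (Fin n)} {v z : ℂ}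
    (hv : ‖v‖ = ‖permSum a ζ σ‖) (hv₀ : v ≠ 0) (hτ : permSum a ζ τ - permSum a ζ σ = v * z) :
    ‖z‖ ≤ 2 := by
  have hle := norm_permSum_sub_le h hn σ τ
  rw [hτ, norm_mul, ← hv] at hle
  exact le_of_mul_le_mul_left (by linarith) (norm_pos_iff.2 hv₀)

include hα in
theorem norm_sub_eq_norm_permSum (hζ : IsPrimitiveRoot ζ n) {i j : Fin n} (hv : a i ≠ a j)
    (σ₀ : Perm (Fin n)) : ‖a i - a j‖ = ‖permSum a ζ σ₀‖ := by
  have hij : i ≠ j := ne_of_apply_ne a hv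
  have hn : 1 < n := by simpa using Fintype.one_lt_card_iff.2 ⟨i, j, hij⟩
  have : NeZero n := ⟨by omega⟩
  set C : Finset ℝ := ((range n).image fun e => ‖ζ ^ e - 1‖).erase 0
  refine eq_of_forall_exists_mul_eq (s := C) ?_ ?_ (norm_nonneg _) ?_
  · intro c hc
    simp only [C, mem_erase, mem_image] at hc
    obtain ⟨hc₀, e, -, rfl⟩ := hc
    exact (norm_nonneg _).lt_of_ne' hc₀
  · refine ⟨‖ζ ^ 1 - 1‖, mem_erase.2 ⟨?_, mem_image_of_mem _ (mem_range.2 hn)⟩⟩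
    simpa [sub_eq_zero] using hζ.ne_one hn
  · intro c hc
    simp only [C, mem_erase, mem_image, mem_range] at hc
    obtain ⟨hc₀, d, hd, rfl⟩ := hc
    have hd₀ : d ≠ 0 := by rintro rfl; simp at hc₀
    obtain ⟨σ, hσ⟩ := hζ.exists_perm_pow_eq hζ (p := ![i, j]) (by simpa) (q := ![0, d])
      (by simpa using hd₀.symm) (by intro t; fin_cases t <;> simp [hd]; omega)
    have hσi : ζ ^ (σ i : ℕ) = 1 := by simpa using hσ 0
    have hσj : ζ ^ (σ j : ℕ) = ζ ^ d := by simpa using hσ 1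
    obtain ⟨e, he, hS⟩ := exists_permSum_eq_pow_mul hα h hζ σ (σ * swap i j)
    have hkey : (a i - a j) * (ζ ^ d - 1) = (ζ ^ e - 1) * permSum a ζ σ := by
      have := permSum_mul_swap_sub a ζ σ hij
      rw [hS, hσi, hσj] at this
      linear_combination -this
    have hnorm := congrArg norm hkey
    rw [norm_mul, norm_mul, norm_permSum_eq h (NeZero.ne n) σ σ₀] at hnorm
    refine ⟨‖ζ ^ e - 1‖, mem_erase.2 ⟨?_, mem_image_of_mem _ (mem_range.2 he)⟩, by
      rw [hnorm, mul_comm]⟩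
    intro h0
    rw [h0, zero_mul] at hnorm
    exact mul_ne_zero (norm_ne_zero_iff.2 (sub_ne_zero.2 hv)) hc₀ hnorm

include hα in
theorem sub_ne_exp_mul_sub (hζ : IsPrimitiveRoot ζ n) {i j k : Fin n} (hij : i ≠ j)
    (hik : i ≠ k) (hv : a j ≠ a k) : a i - a k ≠ exp (↑(π / 3) * I) * (a j - a k) := by
  intro hε
  have hjk : j ≠ k := ne_of_apply_ne a hv
  have hp : Function.Injective ![i, j, k] := by
    intro s t; fin_cases s <;> fin_cases t <;> simp [*, eq_comm]
  have hn : 3 ≤ n := by simpa using Fintype.card_le_of_injective _ hp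
  have : NeZero n := ⟨by omega⟩
  set d := n / 6 + 1
  set η := exp (2 * π * I / n)
  obtain ⟨σ, hσ⟩ := hζ.exists_perm_pow_eq (isPrimitiveRoot_exp n (NeZero.ne n)) hp
    (q := ![0, d, 2 * d]) (by intro s t; fin_cases s <;> fin_cases t <;> simp)
    (by intro t; fin_cases t <;> simp <;> omega)
  have hσi : ζ ^ (σ i : ℕ) = 1 := by simpa using hσ 0
  have hσj : ζ ^ (σ j : ℕ) = η ^ d := by simpa using hσ 1
  have hσk : ζ ^ (σ k : ℕ) = η ^ (2 * d) := by simpa using hσ 2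
  have hτ : permSum a ζ (σ * swap i j * swap j k) - permSum a ζ σ =
      (a j - a k) * ((η ^ d - 1) * (η ^ d + exp (↑(π / 3) * I))) := by
    have e₁ := permSum_mul_swap_sub a ζ (σ * swap i j) hjk
    have e₂ := permSum_mul_swap_sub a ζ σ hij
    simp only [Perm.mul_apply, swap_apply_right,
      swap_apply_of_ne_of_ne (Ne.symm hik) (Ne.symm hjk)] at e₁
    rw [hσi, hσk] at e₁
    rw [hσi, hσj] at e₂
    linear_combination e₁ + e₂ + (η ^ d - 1) * hε
  have hn₀ : (0 : ℝ) < n := by exact_mod_cast (NeZero.pos n)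
  have hd₁ : (n : ℝ) < 6 * d := by exact_mod_cast (by omega : n < 6 * d)
  have hd₂ : 3 * (d : ℝ) ≤ n := by exact_mod_cast (by omega : 3 * d ≤ n)
  have hlt := two_lt_norm_exp_sub_one_mul_exp_add_exp (ψ := 2 * π * d / n)
    (by rw [lt_div_iff₀ hn₀]; nlinarith [Real.pi_pos])
    (by rw [div_le_iff₀ hn₀]; nlinarith [Real.pi_pos])
  rw [← exp_two_pi_I_div_pow] at hlt
  exact (norm_le_two_of_permSum_sub_eq_mul h (NeZero.ne n)
    (norm_sub_eq_norm_permSum hα h hζ hv σ) (sub_ne_zero.2 hv) hτ).not_gt hlt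

include hα in
theorem eq_of_ne_of_ne (hζ : IsPrimitiveRoot ζ n) {i j k : Fin n} (hij : a i ≠ a j)
    (hik : a i ≠ a k) : a j = a k := by
  by_contra hjk
  have hu := norm_sub_eq_norm_permSum hα h hζ hik 1
  have hv := norm_sub_eq_norm_permSum hα h hζ hjk 1
  have huv := norm_sub_eq_norm_permSum hα h hζ hij 1
  rcases eq_exp_pi_div_three_mul_or (u := a i - a k) (v := a j - a k) (hu.trans hv.symm)
    (by rw [sub_sub_sub_cancel_right, huv, hu]) with hε | hε
  · exact sub_ne_exp_mul_sub hα h hζ (ne_of_apply_ne a hij) (ne_of_apply_ne a hik) hjk hε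
  · exact sub_ne_exp_mul_sub hα h hζ (ne_of_apply_ne a hij.symm) (ne_of_apply_ne a hjk) hik hε

include hα in
theorem eq_of_eq_of_eq (hζ : IsPrimitiveRoot ζ n) {i j k l : Fin n} (hij : i ≠ j)
    (hkl : k ≠ l) (hi : a i = a j) (hk : a k = a l) : a i = a k := by
  by_contra hik
  have hik' : i ≠ k := ne_of_apply_ne a hik
  have hil : i ≠ l := ne_of_apply_ne a (hk ▸ hik)
  have hjk : j ≠ k := ne_of_apply_ne a (hi ▸ hik)
  have hjl : j ≠ l := ne_of_apply_ne a (hi ▸ hk ▸ hik)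
  have hp : Function.Injective ![i, j, k, l] := by
    intro s t; fin_cases s <;> fin_cases t <;> simp [*, eq_comm]
  have hn : 4 ≤ n := by simpa using Fintype.card_le_of_injective _ hp
  have : NeZero n := ⟨by omega⟩
  set m := n / 2
  set η := exp (2 * π * I / n)
  obtain ⟨σ, hσ⟩ := hζ.exists_perm_pow_eq (isPrimitiveRoot_exp n (NeZero.ne n)) hp
    (q := ![0, 1, m, m + 1]) (by intro s t; fin_cases s <;> fin_cases t <;> simp <;> omega)
    (by intro t; fin_cases t <;> simp <;> omega)
  have hσi : ζ ^ (σ i : ℕ) = 1 := by simpa using hσ 0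
  have hσj : ζ ^ (σ j : ℕ) = η := by simpa using hσ 1
  have hσk : ζ ^ (σ k : ℕ) = η ^ m := by simpa using hσ 2
  have hσl : ζ ^ (σ l : ℕ) = η ^ (m + 1) := by simpa using hσ 3
  have hτ : permSum a ζ (σ * swap i k * swap j l) - permSum a ζ σ =
      (a i - a k) * ((η ^ m - 1) * (η + 1)) := by
    have e₁ := permSum_mul_swap_sub a ζ (σ * swap i k) hjl
    have e₂ := permSum_mul_swap_sub a ζ σ hik'
    simp only [Perm.mul_apply, swap_apply_of_ne_of_ne hij.symm hjk,
      swap_apply_of_ne_of_ne hil.symm hkl.symm] at e₁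
    rw [hσj, hσl] at e₁
    rw [hσi, hσk] at e₂
    linear_combination e₁ + e₂ - (η ^ (m + 1) - η) * (hi - hk)
  have hn₀ : (0 : ℝ) < n := by exact_mod_cast (NeZero.pos n)
  have hm₁ : (n : ℝ) < 4 * m := by exact_mod_cast (by omega : n < 4 * m)
  have hm₂ : 2 * (m : ℝ) ≤ n := by exact_mod_cast (by omega : 2 * m ≤ n)
  have hn₄ : (4 : ℝ) ≤ n := by exact_mod_cast hn
  have hlt := two_lt_norm_exp_sub_one_mul_exp_add_one (x := 2 * π * m / n)
    (y := 2 * π * (1 : ℕ) / n) (by rw [lt_div_iff₀ hn₀]; nlinarith [Real.pi_pos])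
    (by rw [div_le_iff₀ hn₀]; nlinarith [Real.pi_pos]) (by positivity)
    (by rw [div_le_iff₀ hn₀]; nlinarith [Real.pi_pos])
  rw [← exp_two_pi_I_div_pow, ← exp_two_pi_I_div_pow, pow_one] at hlt
  exact (norm_le_two_of_permSum_sub_eq_mul h (NeZero.ne n)
    (norm_sub_eq_norm_permSum hα h hζ hik σ) (sub_ne_zero.2 hik) hτ).not_gt hlt

end

end RootsOfUnityForm

/-- if `f = Σ aᵢ xᵢ` is a linear form on `ℂ^n` and `α ≠ 0` with `f(v)^n = α`
for every `v` whose coordinates are a permutation of the `n` distinct `n`-th roots of unity,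
then at least `n-1` of the coefficients `aᵢ` are equal (i.e. `f ∈ ℂ xᵢ + ℂ(x_1+...+x_n)`). -/
theorem stmt8 (n : ℕ) (hn : 1 ≤ n) (a : Fin n → ℂ) (α : ℂ) (hα : α ≠ 0)
    (ζ : ℂ) (hζ : IsPrimitiveRoot ζ n)
    (h : ∀ σ : Equiv.Perm (Fin n), (∑ i, a i * ζ ^ (σ i : ℕ)) ^ n = α) :
    ∃ i : Fin n, ∃ c : ℂ, ∀ j, j ≠ i → a j = c := by
  open RootsOfUnityForm in
  by_contra hcon
  push Not at hcon
  have : Nonempty (Fin n) := ⟨⟨0, hn⟩⟩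
  rcases exists_three_ne_or_two_pairs hcon with ⟨i, j, k, hij, hik, hjk⟩ |
    ⟨i, j, k, l, hij, hkl, hi, hk, hik⟩
  · exact hjk (eq_of_ne_of_ne hα h hζ hij hik)
  · exact hik (eq_of_eq_of_eq hα h hζ hij hkl hi hk)
end

section
/- Let R = Z[x_1,...,x_n]/J, where J is the ideal generated by all elementary symmetric polynomials e_1(x_1,...,x_n), ..., e_n(x_1,...,x_n). If f is a Z-linear combination of x_1,...,x_n whose image in R satisfies f^{n-1} = 0, then f = 0 in R. -/
open MvPolynomial Finset

/-!
Specialise `x_k ↦ b_k t` in `ℂ[t]`, where `b` enumerates the `n`-th roots of unity in some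
order. The elementary symmetric functions of the roots of unity vanish in degrees `0 < m < n`, so
this sends `e_1, …, e_{n-1}` to `0` and `e_n` into `(t^n)`. The linear form `f = ∑ a_k x_k` goes to
`(∑ a_k b_k) t`, so `f^{n-1} ∈ J` forces `∑ a_k b_k = 0` for every ordering `b`. Comparing the
orderings `ζ^k` and `ζ^{(i j) k}` gives `(a_i - a_j)(ζ^i - ζ^j) = 0`, so all `a_k` are equal and
`f = a_0 e_1 ∈ J`.
-/

namespace MvPolynomial

theorem IsHomogeneous.aeval_C_mul_X {σ R S : Type*} [CommSemiring R] [CommSemiring S]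
    [Algebra R S] {p : MvPolynomial σ R} {m : ℕ} (hp : p.IsHomogeneous m) (b : σ → S) :
    MvPolynomial.aeval (fun i => Polynomial.C (b i) * Polynomial.X) p =
      Polynomial.C (MvPolynomial.aeval b p) * Polynomial.X ^ m := by
  conv_lhs => rw [p.as_sum]
  conv_rhs => rw [p.as_sum]
  simp only [map_sum, Finset.sum_mul]
  refine Finset.sum_congr rfl fun d hd => ?_
  rw [aeval_monomial, aeval_monomial, hp.degree_eq_sum_deg_support hd]
  simp [Finsupp.prod, mul_pow, Finset.prod_mul_distrib, Finset.prod_pow_eq_pow_sum, mul_assoc,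
    Polynomial.algebraMap_apply]

theorem isHomogeneous_esymm (σ R : Type*) [CommSemiring R] [Fintype σ] (m : ℕ) :
    (esymm σ R m).IsHomogeneous m := by
  refine IsHomogeneous.sum _ _ _ fun t ht => ?_
  rw [← (Finset.mem_powersetCard.mp ht).2, Finset.card_eq_sum_ones]
  exact IsHomogeneous.prod _ _ _ fun i _ => isHomogeneous_X R i

end MvPolynomial

theorem IsPrimitiveRoot.esymm_nthRoots_one_eq_zero {K : Type*} [CommRing K] [IsDomain K]
    {n : ℕ} {ζ : K} (hζ : IsPrimitiveRoot ζ n) {m : ℕ} (hm : 0 < m) (hmn : m < n) :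
    (Polynomial.nthRoots n (1 : K)).esymm m = 0 := by
  have hcard : Multiset.card (Polynomial.nthRoots n (1 : K)) = n := hζ.card_nthRoots_one
  have hprod : ((Polynomial.nthRoots n (1 : K)).map fun t => Polynomial.X - Polynomial.C t).prod
      = Polynomial.X ^ n - Polynomial.C 1 := by
    refine Polynomial.prod_multiset_X_sub_C_of_monic_of_roots_card_eq
      (Polynomial.monic_X_pow_sub_C 1 (by omega)) ?_
    rw [Polynomial.natDegree_X_pow_sub_C, ← Polynomial.nthRoots, hcard]
  have hcoeff := Multiset.prod_X_sub_C_coeff (Polynomial.nthRoots n (1 : K)) (k := n - m)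
    (by omega)
  rw [hprod, hcard, Nat.sub_sub_self hmn.le] at hcoeff
  have hcoeff_zero : (Polynomial.X ^ n - Polynomial.C (1 : K)).coeff (n - m) = 0 := by
    rw [map_one, Polynomial.coeff_sub, Polynomial.coeff_X_pow, Polynomial.coeff_one]
    simp [show n - m ≠ n by omega, show n - m ≠ 0 by omega]
  rw [hcoeff_zero] at hcoeff
  simpa using hcoeff.symm

theorem IsPrimitiveRoot.univ_val_map_pow_eq_nthRoots_one {K : Type*} [CommRing K] [IsDomain K]
    {n : ℕ} {ζ : K} (hζ : IsPrimitiveRoot ζ n) :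
    univ.val.map (fun k : Fin n => ζ ^ (k : ℕ)) = Polynomial.nthRoots n (1 : K) := by
  rw [hζ.nthRoots_eq (one_pow n), Fin.univ_val_map, List.ofFn_eq_map, Multiset.range,
    ← List.map_coe_finRange_eq_range, Multiset.map_coe, List.map_map]
  simp only [mul_one]
  rfl

theorem IsPrimitiveRoot.aeval_esymm_pow_comp_perm_eq_zero {R K : Type*} [CommRing R]
    [CommRing K] [IsDomain K] [Algebra R K] {n : ℕ} {ζ : K} (hζ : IsPrimitiveRoot ζ n)
    (σ : Equiv.Perm (Fin n)) {m : ℕ} (hm : 0 < m) (hmn : m < n) :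
    aeval (fun k => ζ ^ (σ k : ℕ)) (esymm (Fin n) R m) = 0 := by
  change aeval ((fun k : Fin n => ζ ^ (k : ℕ)) ∘ σ) _ = 0
  rw [← aeval_rename, esymm_isSymmetric, aeval_esymm_eq_multiset_esymm,
    hζ.univ_val_map_pow_eq_nthRoots_one, hζ.esymm_nthRoots_one_eq_zero hm hmn]

theorem sum_mul_eq_zero_of_pow_mem_span_esymm {R K : Type*} [CommRing R] [CommRing K]
    [IsDomain K] [Algebra R K] {n : ℕ} (a : Fin n → R) (b : Fin n → K)
    (hb : ∀ m, 0 < m → m < n → aeval b (esymm (Fin n) R m) = 0)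
    (h : (∑ i, C (a i) * X i) ^ (n - 1) ∈
      Ideal.span (Set.range fun i : Fin n => esymm (Fin n) R ((i : ℕ) + 1))) :
    ∑ i, algebraMap R K (a i) * b i = 0 := by
  obtain _ | n := n
  · simp
  rw [Nat.add_sub_cancel] at h
  set φ := aeval (R := R) fun i => Polynomial.C (b i) * Polynomial.X with hφ
  have hJ : Ideal.map φ (Ideal.span (Set.range fun i : Fin (n + 1) =>
      esymm (Fin (n + 1)) R ((i : ℕ) + 1))) ≤ Ideal.span {Polynomial.X ^ (n + 1)} := by
    rw [Ideal.map_span, Ideal.span_le]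
    rintro _ ⟨_, ⟨i, rfl⟩, rfl⟩
    rw [SetLike.mem_coe, Ideal.mem_span_singleton, (isHomogeneous_esymm _ _ _).aeval_C_mul_X]
    rcases (Nat.add_one_le_of_lt i.isLt).lt_or_eq with hlt | heq
    · rw [hb _ (Nat.succ_pos i) hlt, map_zero, zero_mul]
      exact dvd_zero _
    · rw [heq]
      exact dvd_mul_left _ _
  have hlin : (∑ i, C (a i) * X i : MvPolynomial (Fin (n + 1)) R).IsHomogeneous 1 :=
    IsHomogeneous.sum _ _ _ fun i _ => (isHomogeneous_X R i).C_mul (a i)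
  have hdvd := Ideal.mem_span_singleton.mp (hJ (Ideal.mem_map_of_mem φ h))
  rw [hφ, (hlin.pow n).aeval_C_mul_X, one_mul, Polynomial.X_pow_dvd_iff] at hdvd
  have hcoeff := hdvd n n.lt_succ_self
  rw [Polynomial.coeff_C_mul_X_pow, if_pos rfl] at hcoeff
  simp only [map_pow, map_sum, map_mul, aeval_C, aeval_X] at hcoeff
  exact eq_zero_of_pow_eq_zero hcoeff

theorem eq_of_sum_mul_eq_zero_of_sum_mul_swap_eq_zero {ι K : Type*} [Fintype ι] [DecidableEq ι]
    [CommRing K] [IsDomain K] {c b : ι → K} (hb : Function.Injective b) {i j : ι}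
    (h : ∑ k, c k * b k = 0) (hswap : ∑ k, c k * b (Equiv.swap i j k) = 0) : c i = c j := by
  rcases eq_or_ne i j with rfl | hij
  · rfl
  have hdiff : ∑ k, c k * (b k - b (Equiv.swap i j k)) = (c i - c j) * (b i - b j) := by
    rw [Fintype.sum_eq_add i j hij fun k hk => by
      rw [Equiv.swap_apply_of_ne_of_ne hk.1 hk.2, sub_self, mul_zero]]
    rw [Equiv.swap_apply_left, Equiv.swap_apply_right]
    ring
  have hzero : ∑ k, c k * (b k - b (Equiv.swap i j k)) = 0 := by
    simp only [mul_sub, Finset.sum_sub_distrib, h, hswap, sub_zero]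
  rw [hdiff] at hzero
  exact sub_eq_zero.mp ((mul_eq_zero.mp hzero).resolve_right (sub_ne_zero.mpr (hb.ne hij)))

/-- in `R = ℤ[x_1,...,x_n]/⟨e_1,...,e_n⟩` (Borel's presentation of the
cohomology of the full flag variety), a linear form `f` with `f^{n-1} = 0` is zero. -/
theorem stmt9 (n : ℕ) (a : Fin n → ℤ)
    (J : Ideal (MvPolynomial (Fin n) ℤ))
    (hJ : J = Ideal.span (Set.range fun i : Fin n => esymm (Fin n) ℤ ((i : ℕ) + 1)))
    (h : (Ideal.Quotient.mk J (∑ i, C (a i) * X i)) ^ (n - 1) = 0) :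
    Ideal.Quotient.mk J (∑ i, C (a i) * X i) = 0 := by
  rw [← map_pow, Ideal.Quotient.eq_zero_iff_mem, hJ] at h
  rw [Ideal.Quotient.eq_zero_iff_mem, hJ]
  obtain _ | n := n
  · simp
  obtain ⟨ζ, hζ⟩ : ∃ ζ : ℂ, IsPrimitiveRoot ζ (n + 1) :=
    ⟨_, Complex.isPrimitiveRoot_exp (n + 1) n.succ_ne_zero⟩
  have hroot (σ : Equiv.Perm (Fin (n + 1))) : ∑ k, (a k : ℂ) * ζ ^ (σ k : ℕ) = 0 := by
    simpa using sum_mul_eq_zero_of_pow_mem_span_esymm a _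
      (fun _ hm hmn => hζ.aeval_esymm_pow_comp_perm_eq_zero σ hm hmn) h
  have hconst (i : Fin (n + 1)) : a i = a 0 := by
    exact_mod_cast eq_of_sum_mul_eq_zero_of_sum_mul_swap_eq_zero
      (fun k l hkl => Fin.ext (hζ.pow_inj k.isLt l.isLt hkl)) (hroot 1) (hroot (Equiv.swap i 0))
  have hf : ∑ i, C (a i) * X i = C (a 0) * esymm (Fin (n + 1)) ℤ 1 := by
    simp only [esymm_one, Finset.mul_sum, hconst]
  rw [hf]
  exact Ideal.mul_mem_left _ _ (Ideal.subset_span ⟨0, rfl⟩)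
end

section
/- Let λ be its own core: λ_1 = ... = λ_{k-1} = k and λ_i = i+1 for k ≤ i ≤ n, with k < n. With respect to the reverse lexicographic order with x_1 < ... < x_n, reduction of a monomial M modulo the reduced Gröbner basis {h_k(x_1), h_{k-1}(x_1,x_2), ..., h_2(x_1,...,x_{k-1}), x_k h_1(x_1,...,x_k), ..., x_n h_1(x_1,...,x_n)} of I_λ satisfies: (1) if k ≤ i ≤ n and x_i divides M, then x_i divides every monomial of the normal form of M; (2) if M is divisible by none of x_k,...,x_n, then the same is true of every monomial of its normal form. -/
/-!
The generators form a triangular family: the `j`-th one is `x_j ^ D_j` plus terms of lower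
degree in `x_j`, and involves only `x_0, …, x_j`. For such a family, a polynomial of the ideal
whose `x_j`-degrees all stay below `D_j` vanishes: eliminate the last variable by dividing by
the last generator, which is monic in it, and note that the other generators do not involve it.
So normal forms are unique, and stickiness comes from substitutions setting variables to zero.
Setting a sticky `x_i` to zero kills `M` and turns the basis into another triangular family
(with `x_i` itself as `i`-th generator, since the `i`-th generator is a multiple of `x_i`), so
the part of `N` not divisible by `x_i` vanishes. Setting all sticky variables to zero maps
`I_λ` into itself (the non-sticky generators only involve non-sticky variables) and fixes `M`
when no sticky variable divides it, hence fixes `N`.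
-/

open MvPolynomial Finset

namespace Polynomial

variable {A : Type*} [CommRing A] {J : Ideal A}

theorem modByMonic_mem_map_C {y : A[X]} (hy : y ∈ J.map C) (h : A[X]) :
    y %ₘ h ∈ J.map C := by
  rw [as_sum_support_C_mul_X_pow y, ← modByMonicHom_apply, map_sum]
  refine Ideal.sum_mem _ fun i _ => ?_
  rw [modByMonicHom_apply, ← smul_eq_C_mul, smul_modByMonic, smul_eq_C_mul]
  exact Ideal.mul_mem_right _ _ (Ideal.mem_map_of_mem C (Ideal.mem_map_C_iff.mp hy i))

theorem mem_map_C_of_mem_span_sup {h x : A[X]} (hmonic : h.Monic)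
    (hx : x ∈ Ideal.span {h} ⊔ J.map C) (hdeg : x.degree < h.degree) : x ∈ J.map C := by
  nontriviality A
  obtain ⟨a, ha, w, hw, rfl⟩ := Submodule.mem_sup.mp hx
  obtain ⟨u, rfl⟩ := Ideal.mem_span_singleton'.mp ha
  rw [← (modByMonic_eq_self_iff hmonic).mpr hdeg, add_modByMonic, mul_self_modByMonic hmonic,
    zero_add]
  exact modByMonic_mem_map_C hw h

end Polynomial

namespace MvPolynomial

section

variable {R σ : Type*} [CommRing R]

theorem degrees_multiset_prod_X_le (s : Multiset σ) :
    degrees (s.map (X : σ → MvPolynomial σ R)).prod ≤ s := by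
  induction s using Multiset.induction_on with
  | empty => simp [degrees_one]
  | cons a s ih =>
    rw [Multiset.map_cons, Multiset.prod_cons, ← Multiset.singleton_add]
    exact degrees_mul_le.trans (add_le_add (degrees_X' a) ih)

theorem degreeOf_multiset_prod_X_le [DecidableEq σ] (i : σ) (s : Multiset σ) :
    degreeOf i (s.map (X : σ → MvPolynomial σ R)).prod ≤ s.count i := by
  rw [degreeOf_def]
  exact Multiset.count_le_of_le i (degrees_multiset_prod_X_le s)

theorem degreeOf_X_le_one [DecidableEq σ] (i j : σ) :
    degreeOf i (X j : MvPolynomial σ R) ≤ 1 := by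
  rw [degreeOf_def]
  refine (Multiset.count_le_of_le i (degrees_X' j)).trans ?_
  rw [Multiset.count_singleton]
  split <;> omega

end

section SetVarsZero

open scoped Classical

variable {R σ : Type*} [CommRing R] (p : σ → Prop)

noncomputable def setVarsZero : MvPolynomial σ R →ₐ[R] MvPolynomial σ R :=
  aeval fun t => if p t then 0 else X t

variable {p}

theorem setVarsZero_X (t : σ) :
    setVarsZero p (X t : MvPolynomial σ R) = if p t then 0 else X t :=
  aeval_X _ t

theorem setVarsZero_X_mul {t : σ} (ht : p t) (Q : MvPolynomial σ R) :
    setVarsZero p (X t * Q) = 0 := by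
  rw [map_mul, setVarsZero_X, if_pos ht, zero_mul]

theorem setVarsZero_monomial (e : σ →₀ ℕ) (r : R) :
    setVarsZero p (monomial e r) = if ∀ t, p t → e t = 0 then monomial e r else 0 := by
  rw [setVarsZero, aeval_monomial]
  split_ifs with he
  · rw [monomial_eq, algebraMap_eq]
    congr 1
    refine Finsupp.prod_congr fun t ht => ?_
    rw [if_neg fun hpt => Finsupp.mem_support_iff.mp ht (he t hpt)]
  · push Not at he
    obtain ⟨t, hpt, het⟩ := he
    refine mul_eq_zero_of_right _ (Finset.prod_eq_zero (Finsupp.mem_support_iff.mpr het) ?_)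
    simp only [if_pos hpt, zero_pow het]

theorem coeff_setVarsZero (Q : MvPolynomial σ R) (e : σ →₀ ℕ) :
    coeff e (setVarsZero p Q) = if ∀ t, p t → e t = 0 then coeff e Q else 0 := by
  induction Q using MvPolynomial.induction_on' with
  | monomial u a =>
    rw [setVarsZero_monomial]
    rcases eq_or_ne u e with rfl | hne
    · split_ifs <;> simp
    · split_ifs <;> simp [coeff_monomial, hne]
  | add Q₁ Q₂ h₁ h₂ =>
    rw [map_add, coeff_add, coeff_add, h₁, h₂]
    split_ifs <;> simp

theorem support_setVarsZero_subset (Q : MvPolynomial σ R) :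
    (setVarsZero p Q).support ⊆ Q.support := by
  intro e he
  rw [mem_support_iff, coeff_setVarsZero] at he
  split_ifs at he
  · exact mem_support_iff.mpr he
  · exact absurd rfl he

theorem degreeOf_setVarsZero_le (t : σ) (Q : MvPolynomial σ R) :
    degreeOf t (setVarsZero p Q) ≤ degreeOf t Q :=
  degreeOf_le_iff.mpr fun _ he => monomial_le_degreeOf t (support_setVarsZero_subset Q he)

theorem degreeOf_setVarsZero_eq_zero {t : σ} (ht : p t) (Q : MvPolynomial σ R) :
    degreeOf t (setVarsZero p Q) = 0 := by
  refine Nat.eq_zero_of_le_zero (degreeOf_le_iff.mpr fun e he => ?_)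
  rw [mem_support_iff, coeff_setVarsZero] at he
  split_ifs at he with hpe
  · exact (hpe t ht).le
  · exact absurd rfl he

theorem setVarsZero_eq_self {Q : MvPolynomial σ R} (hQ : ∀ t, p t → degreeOf t Q = 0) :
    setVarsZero p Q = Q := by
  ext e
  rw [coeff_setVarsZero]
  split_ifs with he
  · rfl
  · push Not at he
    obtain ⟨t, hpt, het⟩ := he
    rw [eq_comm, ← notMem_support_iff]
    exact notMem_support_of_degreeOf_lt t (by rw [hQ t hpt]; omega)

end SetVarsZero

section

variable {R : Type*} [CommRing R] {m : ℕ}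

variable (R m) in
noncomputable def finSuccLastEquiv :
    MvPolynomial (Fin (m + 1)) R ≃ₐ[R] Polynomial (MvPolynomial (Fin m) R) :=
  (renameEquiv R (finRotate (m + 1))).trans (finSuccEquiv R m)

@[simp]
theorem finSuccLastEquiv_X_last : finSuccLastEquiv R m (X (Fin.last m)) = Polynomial.X := by
  simp [finSuccLastEquiv, finSuccEquiv_X_zero]

@[simp]
theorem finSuccLastEquiv_X_castSucc (j : Fin m) :
    finSuccLastEquiv R m (X j.castSucc) = Polynomial.C (X j) := by
  simp [finSuccLastEquiv, Fin.coeSucc_eq_succ, finSuccEquiv_X_succ]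

theorem natDegree_finSuccLastEquiv (P : MvPolynomial (Fin (m + 1)) R) :
    (finSuccLastEquiv R m P).natDegree = degreeOf (Fin.last m) P := by
  have h := degreeOf_rename_of_injective (finRotate (m + 1)).injective (p := P) (Fin.last m)
  rw [finRotate_last] at h
  simpa [finSuccLastEquiv, natDegree_finSuccEquiv] using h

theorem degreeOf_coeff_finSuccLastEquiv (P : MvPolynomial (Fin (m + 1)) R) (j : Fin m) (t : ℕ) :
    degreeOf j ((finSuccLastEquiv R m P).coeff t) ≤ degreeOf j.castSucc P := by
  have h := degreeOf_rename_of_injective (finRotate (m + 1)).injective (p := P) j.castSucc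
  rw [finRotate_apply, Fin.coeSucc_eq_succ] at h
  rw [← h]
  exact degreeOf_coeff_finSuccEquiv _ j t

def IsTriangular (g : Fin m → MvPolynomial (Fin m) R) (D : Fin m → ℕ) : Prop :=
  ∀ j, degreeOf j (g j - X j ^ D j) < D j ∧ ∀ i, j < i → degreeOf i (g j) = 0

namespace IsTriangular

variable {g : Fin (m + 1) → MvPolynomial (Fin (m + 1)) R} {D : Fin (m + 1) → ℕ}

theorem monic_finSuccLastEquiv_last [Nontrivial R] (hg : IsTriangular g D) :
    (finSuccLastEquiv R m (g (Fin.last m))).Monic ∧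
      (finSuccLastEquiv R m (g (Fin.last m))).degree = D (Fin.last m) := by
  set r := g (Fin.last m) - X (Fin.last m) ^ D (Fin.last m)
  have hr : (finSuccLastEquiv R m r).degree < D (Fin.last m) :=
    (Polynomial.degree_le_natDegree).trans_lt
      (by exact_mod_cast (natDegree_finSuccLastEquiv r).trans_lt (hg _).1)
  have hsplit : finSuccLastEquiv R m (g (Fin.last m)) =
      Polynomial.X ^ D (Fin.last m) + finSuccLastEquiv R m r := by
    rw [← finSuccLastEquiv_X_last, ← map_pow, ← map_add, add_sub_cancel]
  rw [hsplit]
  refine ⟨Polynomial.monic_X_pow_add hr, ?_⟩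
  rw [Polynomial.degree_add_eq_left_of_degree_lt, Polynomial.degree_X_pow]
  rwa [Polynomial.degree_X_pow]

theorem finSuccLastEquiv_castSucc (hg : IsTriangular g D) (j : Fin m) :
    finSuccLastEquiv R m (g j.castSucc) =
      Polynomial.C ((finSuccLastEquiv R m (g j.castSucc)).coeff 0) := by
  refine Polynomial.eq_C_of_natDegree_eq_zero ?_
  rw [natDegree_finSuccLastEquiv]
  exact (hg _).2 _ (Fin.castSucc_lt_last j)

theorem coeff_zero_finSuccLastEquiv (hg : IsTriangular g D) :
    IsTriangular (fun j => (finSuccLastEquiv R m (g j.castSucc)).coeff 0)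
      (fun j => D j.castSucc) := by
  intro j
  refine ⟨?_, fun i hij => ?_⟩
  · have h := degreeOf_coeff_finSuccLastEquiv (g j.castSucc - X j.castSucc ^ D j.castSucc) j 0
    rw [map_sub, map_pow, finSuccLastEquiv_X_castSucc, ← Polynomial.C_pow, Polynomial.coeff_sub,
      Polynomial.coeff_C_zero] at h
    exact h.trans_lt (hg _).1
  · exact Nat.eq_zero_of_le_zero <| (degreeOf_coeff_finSuccLastEquiv _ i 0).trans_eq
      ((hg _).2 _ (Fin.castSucc_lt_castSucc_iff.mpr hij))

theorem finSuccLastEquiv_mem_span (hg : IsTriangular g D) {P : MvPolynomial (Fin (m + 1)) R}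
    (hP : P ∈ Ideal.span (Set.range g)) :
    finSuccLastEquiv R m P ∈ Ideal.span {finSuccLastEquiv R m (g (Fin.last m))} ⊔
      (Ideal.span (Set.range fun j : Fin m => (finSuccLastEquiv R m (g j.castSucc)).coeff 0)).map
        Polynomial.C := by
  have hmap := Ideal.mem_map_of_mem (finSuccLastEquiv R m) hP
  rw [Ideal.map_span, ← Set.range_comp] at hmap
  refine Ideal.span_le.mpr ?_ hmap
  rintro _ ⟨j, rfl⟩
  refine Fin.lastCases (Ideal.mem_sup_left (Ideal.mem_span_singleton_self _)) (fun j => ?_) j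
  · refine Ideal.mem_sup_right ?_
    simp only [Function.comp_apply]
    rw [hg.finSuccLastEquiv_castSucc j]
    exact Ideal.mem_map_of_mem _ (Ideal.subset_span ⟨j, rfl⟩)

end IsTriangular

theorem IsTriangular.eq_zero_of_mem_span {g : Fin m → MvPolynomial (Fin m) R}
    {D : Fin m → ℕ} (hg : IsTriangular g D) {P : MvPolynomial (Fin m) R}
    (hP : P ∈ Ideal.span (Set.range g)) (hPD : ∀ j, degreeOf j P < D j) : P = 0 := by
  nontriviality R
  induction m with
  | zero => simpa using hP
  | succ m ih =>
    obtain ⟨hmonic, hdeg⟩ := hg.monic_finSuccLastEquiv_last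
    have hcoeff := Ideal.mem_map_C_iff.mp <| Polynomial.mem_map_C_of_mem_span_sup hmonic
      (hg.finSuccLastEquiv_mem_span hP) <| by
        rw [hdeg]
        exact (Polynomial.degree_le_natDegree (p := finSuccLastEquiv R m P)).trans_lt
          (by exact_mod_cast (natDegree_finSuccLastEquiv P).trans_lt (hPD _))
    rw [← map_eq_zero_iff _ (finSuccLastEquiv R m).injective]
    refine Polynomial.ext fun t => ?_
    rw [Polynomial.coeff_zero]
    exact ih hg.coeff_zero_finSuccLastEquiv (hcoeff t) fun j =>
      (degreeOf_coeff_finSuccLastEquiv P j t).trans_lt (hPD _)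

theorem IsTriangular.setVarsZero_update {g : Fin m → MvPolynomial (Fin m) R} {D : Fin m → ℕ}
    (hg : IsTriangular g D) (i : Fin m) :
    IsTriangular (Function.update (fun j => setVarsZero (· = i) (g j)) i (X i))
      (Function.update D i 1) := by
  intro j
  rcases eq_or_ne j i with rfl | hji
  · simp only [Function.update_self, pow_one, sub_self, degreeOf_zero, Nat.lt_one_iff,
      true_and]
    exact fun i hij => degreeOf_X_of_ne hij.ne'
  · simp only [Function.update_of_ne hji]
    refine ⟨?_, fun t hjt => Nat.eq_zero_of_le_zero
      ((degreeOf_setVarsZero_le t _).trans_eq ((hg j).2 t hjt))⟩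
    have hXj : setVarsZero (· = i) (X j : MvPolynomial (Fin m) R) = X j := by
      rw [setVarsZero_X, if_neg hji]
    rw [← hXj, ← map_pow, ← map_sub]
    exact (degreeOf_setVarsZero_le j _).trans_lt (hg j).1

theorem map_setVarsZero_span_le_update {g : Fin m → MvPolynomial (Fin m) R} {i : Fin m}
    (hgi : X i ∣ g i) :
    (Ideal.span (Set.range g)).map (setVarsZero (· = i)) ≤
      Ideal.span (Set.range (Function.update (fun j => setVarsZero (· = i) (g j)) i (X i))) := by
  rw [Ideal.map_span, Ideal.span_le]
  rintro _ ⟨_, ⟨j, rfl⟩, rfl⟩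
  rcases eq_or_ne j i with rfl | hji
  · obtain ⟨Q, hQ⟩ := hgi
    rw [hQ, setVarsZero_X_mul (p := (· = j)) rfl]
    exact zero_mem _
  · exact Ideal.subset_span ⟨j, Function.update_of_ne hji _ _⟩

theorem IsTriangular.map_setVarsZero_span_le {g : Fin m → MvPolynomial (Fin m) R}
    {D : Fin m → ℕ} (hg : IsTriangular g D) {p : Fin m → Prop} (hp : Monotone p)
    (hgp : ∀ j, p j → X j ∣ g j) :
    (Ideal.span (Set.range g)).map (setVarsZero p) ≤ Ideal.span (Set.range g) := by
  rw [Ideal.map_span, Ideal.span_le]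
  rintro _ ⟨_, ⟨j, rfl⟩, rfl⟩
  by_cases hj : p j
  · obtain ⟨Q, hQ⟩ := hgp j hj
    rw [hQ, setVarsZero_X_mul hj]
    exact zero_mem _
  · rw [setVarsZero_eq_self fun t ht => (hg j).2 t (lt_of_not_ge fun htj => hj (hp htj ht))]
    exact Ideal.subset_span ⟨j, rfl⟩

def IsNormalForm (g : Fin m → MvPolynomial (Fin m) R) (D : Fin m → ℕ)
    (M N : MvPolynomial (Fin m) R) : Prop :=
  M - N ∈ Ideal.span (Set.range g) ∧ ∀ j, degreeOf j N < D j

namespace IsNormalForm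

variable {g : Fin m → MvPolynomial (Fin m) R} {D : Fin m → ℕ} {M N : MvPolynomial (Fin m) R}

theorem apply_ne_zero_of_X_dvd (hN : IsNormalForm g D M N) (hg : IsTriangular g D)
    {i : Fin m} (hgi : X i ∣ g i) (hM : X i ∣ M) {e : Fin m →₀ ℕ} (he : e ∈ N.support) : e i ≠ 0 := by
  intro hei
  set f := setVarsZero (R := R) (· = i)
  have hfM : f M = 0 := by
    obtain ⟨Q, rfl⟩ := hM
    exact setVarsZero_X_mul (p := (· = i)) rfl Q
  have hfN_mem : f N ∈ Ideal.span
      (Set.range (Function.update (fun j => setVarsZero (· = i) (g j)) i (X i))) := by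
    have h := map_setVarsZero_span_le_update hgi (Ideal.mem_map_of_mem f hN.1)
    rwa [map_sub, hfM, zero_sub, neg_mem_iff] at h
  have hfN_deg : ∀ j, degreeOf j (f N) < Function.update D i 1 j := by
    intro j
    rcases eq_or_ne j i with rfl | hji
    · rw [Function.update_self]
      exact (degreeOf_setVarsZero_eq_zero (p := (· = j)) rfl N).trans_lt Nat.one_pos
    · rw [Function.update_of_ne hji]
      exact (degreeOf_setVarsZero_le j N).trans_lt (hN.2 j)
  have hfN := (hg.setVarsZero_update i).eq_zero_of_mem_span hfN_mem hfN_deg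
  have hcoeff := congrArg (coeff e) hfN
  rw [coeff_setVarsZero, if_pos fun t ht => ht ▸ hei, coeff_zero] at hcoeff
  exact mem_support_iff.mp he hcoeff

theorem apply_eq_zero_of_degreeOf_eq_zero (hN : IsNormalForm g D M N) (hg : IsTriangular g D)
    {p : Fin m → Prop} (hp : Monotone p) (hgp : ∀ j, p j → X j ∣ g j)
    (hM : ∀ t, p t → degreeOf t M = 0) {e : Fin m →₀ ℕ} (he : e ∈ N.support) {t : Fin m}
    (ht : p t) : e t = 0 := by
  set f := setVarsZero (R := R) p
  have hmem : N - f N ∈ Ideal.span (Set.range g) := by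
    have h := hg.map_setVarsZero_span_le hp hgp (Ideal.mem_map_of_mem f hN.1)
    rw [map_sub, setVarsZero_eq_self hM] at h
    simpa using sub_mem h hN.1
  have hdeg : ∀ j, degreeOf j (N - f N) < D j := fun j =>
    (degreeOf_sub_le j _ _).trans_lt
      (max_lt (hN.2 j) ((degreeOf_setVarsZero_le j N).trans_lt (hN.2 j)))
  have hfN : f N = N := (sub_eq_zero.mp (hg.eq_zero_of_mem_span hmem hdeg)).symm
  by_contra het
  have hcoeff := congrArg (coeff e) hfN
  rw [coeff_setVarsZero, if_neg fun h => het (h t ht)] at hcoeff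
  exact mem_support_iff.mp he hcoeff.symm

end IsNormalForm

end

end MvPolynomial

section

variable {R : Type*} [CommRing R] {n : ℕ} {S : Finset (Fin n)}

theorem degreeOf_hh_sub_X_pow_lt {m : ℕ} {j : Fin n} (hj : j ∈ S) (hm : 0 < m) :
    degreeOf j (hh R n m S - X j ^ m) < m := by
  have hrep : Sym.replicate m j ∈ S.sym m := replicate_mem_sym hj m
  rw [hh, ← Finset.add_sum_erase (S.sym m) _ hrep, Sym.coe_replicate, Multiset.map_replicate,
    Multiset.prod_replicate, add_sub_cancel_left]
  refine (degreeOf_sum_le _ _ _).trans_lt ((Finset.sup_lt_iff hm).mpr fun s hs => ?_)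
  refine (degreeOf_multiset_prod_X_le _ _).trans_lt ?_
  have hcard : Multiset.card (s : Multiset (Fin n)) = m := s.card_coe
  refine lt_of_le_of_ne ((Multiset.count_le_card j _).trans_eq hcard) fun hcount => ?_
  refine (Finset.mem_erase.mp hs).1 (Sym.eq_replicate.mpr fun b hb => ?_)
  exact (Multiset.count_eq_card.mp (hcount.trans hcard.symm) b hb).symm

theorem degreeOf_hh_of_notMem {i : Fin n} (hi : i ∉ S) (m : ℕ) :
    degreeOf i (hh R n m S) = 0 := by
  refine Nat.eq_zero_of_le_zero ((degreeOf_sum_le _ _ _).trans (Finset.sup_le fun s hs => ?_))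
  refine (degreeOf_multiset_prod_X_le _ _).trans_eq (Multiset.count_eq_zero.mpr fun his => ?_)
  exact hi (Finset.mem_sym_iff.mp hs i his)

end

section Core

variable (R : Type*) [CommRing R] (n k : ℕ)

/-- The reduced Gröbner basis of `I_λ`, with variables indexed from `0`: its `j`-th element has
leading term `x_j ^ coreDeg n k j`. -/
noncomputable def coreGens (j : Fin n) : MvPolynomial (Fin n) R :=
  if (j : ℕ) + 1 < k then hh R n (k - (j : ℕ)) (fv n ((j : ℕ) + 1))
  else X j * hh R n 1 (fv n ((j : ℕ) + 1))

def coreDeg (j : Fin n) : ℕ := if (j : ℕ) + 1 < k then k - (j : ℕ) else 2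

variable {R n k}

theorem mem_fv_iff {j i : Fin n} : i ∈ fv n ((j : ℕ) + 1) ↔ i ≤ j := by
  simp only [fv, Finset.mem_filter, Finset.mem_univ, true_and, Fin.le_iff_val_le_val]
  omega

theorem isTriangular_coreGens : IsTriangular (coreGens R n k) (coreDeg n k) := by
  intro j
  have hj : j ∈ fv n ((j : ℕ) + 1) := mem_fv_iff.mpr le_rfl
  have hvars : ∀ i, j < i → ∀ m, degreeOf i (hh R n m (fv n ((j : ℕ) + 1))) = 0 :=
    fun i hji => degreeOf_hh_of_notMem (fun hi => (mem_fv_iff.mp hi).not_gt hji)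
  unfold coreGens coreDeg
  split_ifs with hjk
  · exact ⟨degreeOf_hh_sub_X_pow_lt hj (by omega), fun i hji => hvars i hji _⟩
  · refine ⟨?_, fun i hji => Nat.eq_zero_of_le_zero ?_⟩
    · have h := degreeOf_hh_sub_X_pow_lt (R := R) hj Nat.one_pos
      rw [pow_one] at h
      rw [sq, ← mul_sub]
      exact (degreeOf_mul_le _ _ _).trans_lt (by linarith [degreeOf_X_le_one (R := R) j j])
    · exact (degreeOf_mul_le _ _ _).trans_eq (by rw [degreeOf_X_of_ne hji.ne', hvars i hji])

theorem X_dvd_coreGens {j : Fin n} (hj : k ≤ (j : ℕ) + 1) : X j ∣ coreGens R n k j := by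
  rw [coreGens, if_neg (by omega)]
  exact dvd_mul_right _ _

theorem degreeOf_lt_coreDeg {N : MvPolynomial (Fin n) R}
    (hN : ∀ d ∈ N.support, ∀ j : Fin n,
      d j ≤ if (j : ℕ) + 1 < k then k - ((j : ℕ) + 1) else 1) (j : Fin n) :
    degreeOf j N < coreDeg n k j := by
  refine (degreeOf_lt_iff (by unfold coreDeg; split_ifs <;> omega)).mpr fun d hd => ?_
  have := hN d hd j
  unfold coreDeg
  split_ifs at this ⊢ <;> omega

end Core

theorem stmt13_general (n k : ℕ)
    (I : Ideal (MvPolynomial (Fin n) ℤ))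
    (hI : I = Ideal.span (Set.range fun j : Fin n =>
      if (j : ℕ) + 1 < k then hh ℤ n (k - (j : ℕ)) (fv n ((j : ℕ) + 1))
      else X j * hh ℤ n 1 (fv n ((j : ℕ) + 1))))
    (d : Fin n →₀ ℕ) (N : MvPolynomial (Fin n) ℤ)
    (hcong : (monomial d (1 : ℤ)) - N ∈ I)
    (hstd : ∀ d' ∈ N.support, ∀ j : Fin n,
      d' j ≤ if (j : ℕ) + 1 < k then k - ((j : ℕ) + 1) else 1) :
    (∀ i : Fin n, k ≤ (i : ℕ) + 1 → d i ≠ 0 → ∀ d' ∈ N.support, d' i ≠ 0) ∧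
    ((∀ i : Fin n, k ≤ (i : ℕ) + 1 → d i = 0) →
      ∀ d' ∈ N.support, ∀ i : Fin n, k ≤ (i : ℕ) + 1 → d' i = 0) := by
  subst hI
  have hN : IsNormalForm (coreGens ℤ n k) (coreDeg n k) (monomial d 1) N :=
    ⟨hcong, degreeOf_lt_coreDeg hstd⟩
  have hsticky : Monotone fun t : Fin n => k ≤ (t : ℕ) + 1 :=
    fun a b hab ha => ha.trans (by simpa using hab)
  refine ⟨fun i hi hdi d' hd' => ?_, fun hd d' hd' i hi => ?_⟩
  · exact hN.apply_ne_zero_of_X_dvd isTriangular_coreGens (X_dvd_coreGens hi)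
      (X_dvd_monomial.mpr (Or.inr hdi)) hd'
  · refine hN.apply_eq_zero_of_degreeOf_eq_zero isTriangular_coreGens hsticky
      (fun j hj => X_dvd_coreGens hj) (fun t ht => ?_) hd' hi
    rw [degreeOf_monomial_eq _ _ one_ne_zero]
    exact hd t ht

/-- "stickiness": let `λ` be its own core (`λ_1 = ... = λ_{k-1} = k`,
`λ_i = i + 1` for `k ≤ i ≤ n`, `k < n`). The normal form of a monomial `M` modulo the
reduced Gröbner basis of `I_λ` — i.e. the unique polynomial `N` supported on standard
monomials (exponent of `x_j` at most `k - j` for `j ≤ k-1`, at most `1` for `j ≥ k`)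
with `M ≡ N (mod I_λ)` — satisfies: (1) if `x_i` is sticky (`k ≤ i ≤ n`) and divides `M`,
then `x_i` divides every monomial of `N`; (2) if no sticky variable divides `M`, then no
sticky variable divides any monomial of `N`. (0-indexed variables; row `j' = j+1`.) -/
theorem stmt13 (n k : ℕ) (hk : 1 ≤ k) (hkn : k < n)
    (I : Ideal (MvPolynomial (Fin n) ℤ))
    (hI : I = Ideal.span (Set.range fun j : Fin n =>
      if (j : ℕ) + 1 < k then hh ℤ n (k - (j : ℕ)) (fv n ((j : ℕ) + 1))
      else X j * hh ℤ n 1 (fv n ((j : ℕ) + 1))))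
    (d : Fin n →₀ ℕ) (N : MvPolynomial (Fin n) ℤ)
    (hcong : (monomial d (1 : ℤ)) - N ∈ I)
    (hstd : ∀ d' ∈ N.support, ∀ j : Fin n,
      d' j ≤ if (j : ℕ) + 1 < k then k - ((j : ℕ) + 1) else 1) :
    (∀ i : Fin n, k ≤ (i : ℕ) + 1 → d i ≠ 0 → ∀ d' ∈ N.support, d' i ≠ 0) ∧
    ((∀ i : Fin n, k ≤ (i : ℕ) + 1 → d i = 0) →
      ∀ d' ∈ N.support, ∀ i : Fin n, k ≤ (i : ℕ) + 1 → d' i = 0) :=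
  stmt13_general n k I hI d N hcong hstd
end

section
/- Let λ be an indecomposable partition (λ_i ≥ i+1 for all i) which is its own core, with k = λ_1, and let f = Σ_{i=1}^n a_i x_i ∈ R^λ. Write f = g + h where g = Σ_{i=1}^{k-1} a_i x_i and h = Σ_{i=k}^n a_i x_i. If f^m = 0 in R^λ for some positive integer m, then g^m = 0 in R^λ. -/
open MvPolynomial Finset

lemma aeval_hh_aux (n kk d j : ℕ) :
    aeval (fun i : Fin n => if (i : ℕ) < kk then X i else 0) (hh ℤ n d (fv n j)) =
    hh ℤ n d (fv n (min j kk)) := by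
  set σ : Fin n → MvPolynomial (Fin n) ℤ :=
    fun i : Fin n => if (i : ℕ) < kk then X i else 0 with hσ
  unfold hh
  rw [map_sum]
  have hterm : ∀ s : Sym (Fin n) d,
      (aeval σ : MvPolynomial (Fin n) ℤ →ₐ[ℤ] MvPolynomial (Fin n) ℤ)
        ((s : Multiset (Fin n)).map X).prod = ((s : Multiset (Fin n)).map σ).prod := by
    intro s
    rw [map_multiset_prod, Multiset.map_map]
    simp only [Function.comp_def, aeval_X]
  have hsub : (fv n (min j kk)).sym d ⊆ (fv n j).sym d := by
    apply Finset.sym_mono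
    intro i hi
    simp only [fv, Finset.mem_filter, Finset.mem_univ, true_and] at hi ⊢
    omega
  have hzero : ∀ s ∈ (fv n j).sym d, s ∉ (fv n (min j kk)).sym d →
      (aeval σ : MvPolynomial (Fin n) ℤ →ₐ[ℤ] MvPolynomial (Fin n) ℤ)
        ((s : Multiset (Fin n)).map X).prod = 0 := by
    intro s hs hns
    rw [hterm]
    rw [Finset.mem_sym_iff] at hns
    push_neg at hns
    obtain ⟨i, hi, hni⟩ := hns
    have hij : i ∈ fv n j := (Finset.mem_sym_iff.mp hs) i hi
    simp only [fv, Finset.mem_filter, Finset.mem_univ, true_and] at hij hni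
    have hσi : σ i = 0 := by
      simp only [hσ, if_neg (by omega : ¬ (i : ℕ) < kk)]
    apply Multiset.prod_eq_zero
    rw [← hσi]
    exact Multiset.mem_map_of_mem σ hi
  rw [← Finset.sum_subset hsub hzero]
  apply Finset.sum_congr rfl
  intro s hs
  rw [hterm]
  congr 1
  apply Multiset.map_congr rfl
  intro i hi
  have := (Finset.mem_sym_iff.mp hs) i hi
  simp only [fv, Finset.mem_filter, Finset.mem_univ, true_and] at this
  simp only [hσ, if_pos (by omega : (i : ℕ) < kk)]

/-- let `λ` be an indecomposable partition which is its own core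
(`λ_1 = ... = λ_{k-1} = k`, `λ_i = i+1` for `k ≤ i ≤ n`), and `f = Σ aᵢ xᵢ ∈ R^λ`.
Write `f = g + h` with `g` supported on `x_1, ..., x_{k-1}` and `h` on `x_k, ..., x_n`.
If `f^m = 0` in `R^λ` for some `m ≥ 1`, then `g^m = 0` in `R^λ`. -/
theorem stmt14 (n k : ℕ) (hk2 : 2 ≤ k) (hkn : k ≤ n)
    (I : Ideal (MvPolynomial (Fin n) ℤ))
    (hI : I = Ideal.span (Set.range fun j : Fin n =>
      hh ℤ n ((if (j : ℕ) + 1 < k then k else (j : ℕ) + 2) - (j : ℕ)) (fv n ((j : ℕ) + 1))))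
    (a : Fin n → ℤ) (m : ℕ) (hm : 1 ≤ m)
    (hf : (Ideal.Quotient.mk I (∑ i, C (a i) * X i)) ^ m = 0) :
    (Ideal.Quotient.mk I (∑ i ∈ fv n (k - 1), C (a i) * X i)) ^ m = 0 := by
  set σ : Fin n → MvPolynomial (Fin n) ℤ :=
    fun i : Fin n => if (i : ℕ) < k - 1 then X i else 0 with hσ
  -- each generator maps into I under aeval σ
  have hgen : ∀ j : Fin n,
      aeval σ (hh ℤ n ((if (j : ℕ) + 1 < k then k else (j : ℕ) + 2) - (j : ℕ))
        (fv n ((j : ℕ) + 1))) ∈ I := by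
    intro j
    rw [hσ, aeval_hh_aux]
    by_cases hj : (j : ℕ) + 1 < k
    · have hmin : min ((j : ℕ) + 1) (k - 1) = (j : ℕ) + 1 := by omega
      rw [hmin, hI]
      exact Ideal.subset_span ⟨j, rfl⟩
    · have hmin : min ((j : ℕ) + 1) (k - 1) = k - 1 := by omega
      have hdeg : (if (j : ℕ) + 1 < k then k else (j : ℕ) + 2) - (j : ℕ) = 2 := by
        rw [if_neg hj]; omega
      rw [hmin, hdeg, hI]
      refine Ideal.subset_span ⟨⟨k - 2, by omega⟩, ?_⟩
      show hh ℤ n ((if (k - 2) + 1 < k then k else (k - 2) + 2) - (k - 2)) (fv n ((k - 2) + 1)) =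
        hh ℤ n 2 (fv n (k - 1))
      rw [if_pos (by omega)]
      have e1 : k - (k - 2) = 2 := by omega
      have e2 : k - 2 + 1 = k - 1 := by omega
      rw [e1, e2]
  -- I is stable under aeval σ
  have hstab : I ≤ Ideal.comap (aeval σ : MvPolynomial (Fin n) ℤ →ₐ[ℤ] MvPolynomial (Fin n) ℤ).toRingHom I := by
    conv_lhs => rw [hI]
    rw [Ideal.span_le]
    rintro _ ⟨j, rfl⟩
    exact hgen j
  -- f^m ∈ I
  have hfm : (∑ i, C (a i) * X i) ^ m ∈ I := by
    rw [← map_pow] at hf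
    exact Ideal.Quotient.eq_zero_iff_mem.mp hf
  have h2 : aeval σ ((∑ i, C (a i) * X i) ^ m) ∈ I := hstab hfm
  have hg : aeval σ (∑ i, C (a i) * X i) = ∑ i ∈ fv n (k - 1), C (a i) * X i := by
    rw [map_sum, fv, Finset.sum_filter]
    apply Finset.sum_congr rfl
    intro i _
    simp only [map_mul, aeval_C, aeval_X, hσ]
    split <;> simp [algebraMap_int_eq]
  rw [map_pow, hg] at h2
  rw [← map_pow]
  exact Ideal.Quotient.eq_zero_iff_mem.mpr h2
end

section
/- Let R = T^{(1)} ⊗_Z ... ⊗_Z T^{(r)} be a tensor product of standard graded Z-algebras whose graded pieces are free Z-modules, and let x = x_1⊗1⊗...⊗1 + 1⊗x_2⊗...⊗1 + ... + 1⊗...⊗x_r with x_i ∈ T^{(i)}_1 of nilpotence order k_i. Then the nilpotence order of x in R is k_1 + k_2 + ... + k_r − r + 1. -/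
open MvPolynomial Finset

section Aux

variable {r : ℕ} {T : Fin r → Type*} [∀ i, CommRing (T i)]

lemma aux_tprod_prod (g : Fin r → ∀ i, T i) (s : Finset (Fin r)) :
    ∏ a ∈ s, PiTensorProduct.tprod ℤ (g a) =
      PiTensorProduct.tprod ℤ (fun j => ∏ a ∈ s, g a j) := by
  classical
  induction s using Finset.induction with
  | empty =>
    simp only [Finset.prod_empty]
    exact PiTensorProduct.one_def
  | @insert a s ha ih =>
    rw [Finset.prod_insert ha, ih, PiTensorProduct.tprod_mul_tprod]
    congr 1
    funext j
    simp [Finset.prod_insert ha]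

lemma aux_tprod_pow (f : ∀ i, T i) (m : ℕ) :
    (PiTensorProduct.tprod ℤ f) ^ m = PiTensorProduct.tprod ℤ (fun j => f j ^ m) := by
  induction m with
  | zero =>
    simp only [pow_zero]
    exact PiTensorProduct.one_def
  | succ n ih =>
    rw [pow_succ, ih, PiTensorProduct.tprod_mul_tprod]
    congr 1
    funext j
    simp [pow_succ]

lemma aux_prod_update (x : ∀ i, T i) (m : Fin r → ℕ) :
    ∏ a : Fin r, (PiTensorProduct.tprod ℤ
        (Function.update (fun j => (1 : T j)) a (x a))) ^ m a =
      PiTensorProduct.tprod ℤ (fun j => x j ^ m j) := by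
  classical
  have h1 : ∀ a : Fin r, (PiTensorProduct.tprod ℤ
      (Function.update (fun j => (1 : T j)) a (x a))) ^ m a =
      PiTensorProduct.tprod ℤ (Function.update (fun j => (1 : T j)) a (x a ^ m a)) := by
    intro a
    rw [aux_tprod_pow]
    congr 1
    funext j
    by_cases h : j = a
    · subst h; simp
    · simp [Function.update_of_ne h]
  simp_rw [h1]
  rw [aux_tprod_prod]
  congr 1
  funext j
  rw [Finset.prod_eq_single j]
  · simp
  · intro a _ haj
    exact Function.update_of_ne (Ne.symm haj) _ _
  · simp

end Aux

open scoped TensorProduct in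
/-- if `R = T⁽¹⁾ ⊗_ℤ ... ⊗_ℤ T⁽ʳ⁾` is a tensor product of standard graded
ℤ-algebras with free graded pieces, and `x = Σᵢ 1 ⊗ ... ⊗ xᵢ ⊗ ... ⊗ 1` with `xᵢ` a
degree-one element of `T⁽ⁱ⁾` of nilpotence order `kᵢ`, then `x` has nilpotence order
`k₁ + ... + k_r − r + 1`. -/
theorem stmt16 (r : ℕ) (T : Fin r → Type*) [∀ i, CommRing (T i)]
    (𝒜 : ∀ i, ℕ → Submodule ℤ (T i)) [∀ i, GradedAlgebra (𝒜 i)]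
    (hfree : ∀ i d, Module.Free ℤ (𝒜 i d))
    (h0 : ∀ i, 𝒜 i 0 = (1 : Submodule ℤ (T i)))
    (hgen : ∀ i, Algebra.adjoin ℤ ((𝒜 i 1 : Submodule ℤ (T i)) : Set (T i)) = ⊤)
    (x : ∀ i, T i) (hx : ∀ i, x i ∈ 𝒜 i 1)
    (k : Fin r → ℕ) (hk1 : ∀ i, 1 ≤ k i)
    (hknil : ∀ i, x i ^ k i = 0) (hkmin : ∀ i, x i ^ (k i - 1) ≠ 0) :
    (∑ i, PiTensorProduct.tprod ℤ
        (Function.update (fun j => (1 : T j)) i (x i))) ^ (∑ i, k i - r + 1) = 0 ∧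
    (∑ i, PiTensorProduct.tprod ℤ
        (Function.update (fun j => (1 : T j)) i (x i))) ^ (∑ i, k i - r) ≠ 0 := by
  classical
  -- arithmetic: ∑ (k i - 1) = ∑ k i - r
  have hsum : ∑ i, (k i - 1) = ∑ i, k i - r := by
    have h : ∑ i, ((k i - 1) + 1) = ∑ i, k i := by
      apply Finset.sum_congr rfl
      intro i _
      have := hk1 i
      omega
    rw [Finset.sum_add_distrib] at h
    simp only [Finset.sum_const, Finset.card_univ, Fintype.card_fin, smul_eq_mul, mul_one] at h
    omega
  -- the expansion of powers via piAntidiag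
  have hexp : ∀ N : ℕ,
      (∑ i, PiTensorProduct.tprod ℤ
        (Function.update (fun j => (1 : T j)) i (x i))) ^ N =
      ∑ m ∈ Finset.piAntidiag Finset.univ N,
        (Nat.multinomial Finset.univ m : ⨂[ℤ] i, T i) *
          PiTensorProduct.tprod ℤ (fun j => x j ^ m j) := by
    intro N
    rw [Finset.sum_pow_eq_sum_piAntidiag]
    apply Finset.sum_congr rfl
    intro m _
    rw [aux_prod_update]
  constructor
  · -- vanishing part
    rw [hexp]
    apply Finset.sum_eq_zero
    intro m hm
    rw [Finset.mem_piAntidiag] at hm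
    obtain ⟨hmsum, -⟩ := hm
    -- some m i ≥ k i
    have hex : ∃ i, k i ≤ m i := by
      by_contra hcon
      push_neg at hcon
      have hle : ∑ i, m i ≤ ∑ i, (k i - 1) := by
        apply Finset.sum_le_sum
        intro i _
        have := hcon i
        omega
      have hle2 : ∑ i, k i - r + 1 ≤ ∑ i, k i - r :=
        le_trans (le_of_eq hmsum.symm) (hsum ▸ hle)
      omega
    obtain ⟨i, hi⟩ := hex
    have hz : x i ^ m i = 0 := by
      have : x i ^ m i = x i ^ k i * x i ^ (m i - k i) := by
        rw [← pow_add]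
        congr 1
        omega
      rw [this, hknil i, zero_mul]
    have : PiTensorProduct.tprod ℤ (fun j => x j ^ m j) = 0 :=
      MultilinearMap.map_coord_zero _ i hz
    rw [this, mul_zero]
  · -- nonvanishing part
    -- each T i is a free ℤ-module
    have hfreeT : ∀ i, Module.Free ℤ (T i) := by
      intro i
      letI : ∀ d, Module.Free ℤ (𝒜 i d) := hfree i
      exact Module.Free.of_equiv (DirectSum.decomposeLinearEquiv (𝒜 i)).symm
    -- pick functionals detecting x i ^ (k i - 1)
    have hφ : ∀ i, ∃ φ : T i →ₗ[ℤ] ℤ, φ (x i ^ (k i - 1)) ≠ 0 := by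
      intro i
      letI := hfreeT i
      set b := Module.Free.chooseBasis ℤ (T i)
      have hne : b.repr (x i ^ (k i - 1)) ≠ 0 := by
        intro h
        apply hkmin i
        have := b.repr.injective (a₁ := x i ^ (k i - 1)) (a₂ := 0)
        apply this
        simpa using h
      obtain ⟨j, hj⟩ := Finsupp.ne_iff.mp hne
      exact ⟨b.coord j, by simpa [Module.Basis.coord_apply] using hj⟩
    choose φ hφne using hφ
    set ψ : (⨂[ℤ] i, T i) →ₗ[ℤ] ℤ :=
      PiTensorProduct.lift ((MultilinearMap.mkPiAlgebra ℤ (Fin r) ℤ).compLinearMap φ)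
    have hψ : ∀ y : ∀ i, T i, ψ (PiTensorProduct.tprod ℤ y) = ∏ i, φ i (y i) := by
      intro y
      simp [ψ, PiTensorProduct.lift.tprod]
    -- compute x ^ (∑ k - r)
    rw [hexp]
    set m₀ : Fin r → ℕ := fun i => k i - 1 with hm₀
    have hm₀mem : m₀ ∈ Finset.piAntidiag (Finset.univ : Finset (Fin r)) (∑ i, k i - r) := by
      rw [Finset.mem_piAntidiag]
      exact ⟨hsum, fun i _ => Finset.mem_univ i⟩
    have hsingle : ∑ m ∈ Finset.piAntidiag Finset.univ (∑ i, k i - r),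
        (Nat.multinomial Finset.univ m : ⨂[ℤ] i, T i) *
          PiTensorProduct.tprod ℤ (fun j => x j ^ m j) =
        (Nat.multinomial Finset.univ m₀ : ⨂[ℤ] i, T i) *
          PiTensorProduct.tprod ℤ (fun j => x j ^ m₀ j) := by
      apply Finset.sum_eq_single m₀
      · intro m hm hmne
        rw [Finset.mem_piAntidiag] at hm
        obtain ⟨hmsum, -⟩ := hm
        -- either m = m₀ or some m i ≥ k i
        have hex : ∃ i, k i ≤ m i := by
          by_contra hcon
          push_neg at hcon
          apply hmne
          funext i
          have hle : ∀ i ∈ Finset.univ, m i ≤ m₀ i := by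
            intro i _
            have := hcon i
            show m i ≤ k i - 1
            omega
          have heq : ∑ i, m i = ∑ i, m₀ i := hmsum.trans hsum.symm
          exact (Finset.sum_eq_sum_iff_of_le hle).mp heq i (Finset.mem_univ i)
        obtain ⟨i, hi⟩ := hex
        have hz : x i ^ m i = 0 := by
          have : x i ^ m i = x i ^ k i * x i ^ (m i - k i) := by
            rw [← pow_add]; congr 1; omega
          rw [this, hknil i, zero_mul]
        have : PiTensorProduct.tprod ℤ (fun j => x j ^ m j) = 0 :=
          MultilinearMap.map_coord_zero _ i hz
        rw [this, mul_zero]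
      · intro h
        exact absurd hm₀mem h
    rw [hsingle]
    intro hzero
    -- apply ψ
    have := congrArg ψ hzero
    rw [map_zero, ← nsmul_eq_mul, map_nsmul, hψ] at this
    have hprod : ∏ i, φ i (x i ^ (m₀ i)) ≠ 0 := by
      apply Finset.prod_ne_zero_iff.mpr
      intro i _
      exact hφne i
    have hmul : Nat.multinomial Finset.univ m₀ ≠ 0 :=
      (Nat.multinomial_pos _ _).ne'
    rw [nsmul_eq_mul] at this
    rcases mul_eq_zero.mp this with h | h
    · exact hmul (by exact_mod_cast h)
    · exact hprod h
end

section
/- Let k ≥ 2, m ≥ 3, k ≤ m, and consider R = Z[x_1,x_2]/⟨x_1^k, h_{m-1}(x_1,x_2)⟩ (the ring R^{(k,m)}). Then for every integer α, the element (x_2 + α x_1)^{m-1} is nonzero in R. Moreover x_2^m = 0 in R. -/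
open MvPolynomial Finset

/-!
Send `x₁ ↦ ε`, `x₂ ↦ X` into the dual numbers over `ℤ[X]`. As `k ≥ 2` this kills `x₁ ^ k`, and it
sends `h_{m-1}` to `X ^ (m-1) + ε X ^ (m-2)` and `(x₂ + α x₁) ^ (m-1)` to
`X ^ (m-1) + (m-1) α ε X ^ (m-2)`. If the first divided the second, comparing `ε`-parts and
cancelling `X ^ (m-2)` would give `1 + X q = (m-1) α` in `ℤ[X]`, so `(m-1) α = 1`, impossible for
`m ≥ 3`. For the second claim, `(x₂ - x₁) h_{m-1} = x₂ ^ m - x₁ ^ m` and `x₁ ^ k ∣ x₁ ^ m`.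
-/

lemma fv_self (n : ℕ) : fv n n = univ := by
  ext i
  simp [fv]

lemma Multiset.eq_replicate_count_one_add_replicate_count_zero (s : Multiset (Fin 2)) :
    s = replicate (s.count 1) 1 + replicate (s.count 0) 0 := by
  ext a
  fin_cases a <;> simp [Multiset.count_replicate]

lemma Sym.count_one_add_count_zero {n : ℕ} (s : Sym (Fin 2) n) :
    (s : Multiset (Fin 2)).count 1 + (s : Multiset (Fin 2)).count 0 = n := by
  simpa using (congrArg Multiset.card
    (s : Multiset (Fin 2)).eq_replicate_count_one_add_replicate_count_zero).symm

lemma hh_two_eq_sum (R : Type*) [CommRing R] (n : ℕ) :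
    hh R 2 n (fv 2 2) = ∑ j ∈ range (n + 1), X 1 ^ j * X 0 ^ (n - j) := by
  rw [hh, fv_self, sym_univ]
  symm
  refine sum_bij' (fun j hj => ⟨Multiset.replicate j 1 + Multiset.replicate (n - j) 0, ?_⟩)
    (fun s _ => (s : Multiset (Fin 2)).count 1) (fun _ _ => mem_univ _) ?_ ?_ ?_ ?_
  · simp only [Multiset.card_add, Multiset.card_replicate]
    simp only [mem_range] at hj
    omega
  · intro s _
    have := s.count_one_add_count_zero
    simp only [mem_range]
    omega
  · intro j _
    simp [Multiset.count_replicate]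
  · intro s _
    have := s.count_one_add_count_zero
    ext1
    conv_rhs => rw [(s : Multiset (Fin 2)).eq_replicate_count_one_add_replicate_count_zero]
    simp only [Sym.coe_mk]
    congr 2
    omega
  · intro j _
    simp [Multiset.map_replicate, Multiset.prod_replicate]

lemma hh_two_mul_sub (R : Type*) [CommRing R] (n : ℕ) :
    hh R 2 n (fv 2 2) * (X 1 - X 0) = X 1 ^ (n + 1) - X 0 ^ (n + 1) := by
  simpa [hh_two_eq_sum] using geom_sum₂_mul (X 1 : MvPolynomial (Fin 2) R) (X 0) (n + 1)

open scoped Polynomial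
open DualNumber TrivSqZeroExt

lemma DualNumber.eps_pow_eq_zero (R : Type*) [Semiring R] {k : ℕ} (hk : 2 ≤ k) :
    (ε : DualNumber R) ^ k = 0 :=
  pow_eq_zero_of_le hk eps_pow_two

lemma aeval_hh_two_dualNumber (R : Type*) [CommRing R] (n : ℕ) :
    aeval ![ε, inl Polynomial.X] (hh R 2 (n + 1) (fv 2 2))
      = (inl (Polynomial.X ^ (n + 1)) + inr (Polynomial.X ^ n) : DualNumber R[X]) := by
  rw [hh_two_eq_sum, map_sum, sum_range_succ, sum_range_succ, sum_eq_zero]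
  · simp [inr_eq_smul_eps, inl_mul_eq_smul, add_comm]
  · intro j hj
    simp only [mem_range] at hj
    simp [eps_pow_eq_zero R[X] (by omega : 2 ≤ n + 1 - j)]

lemma dualNumber_not_dvd_pow {n : ℕ} (hn : 1 ≤ n) (α : ℤ) :
    ¬ (inl (Polynomial.X ^ (n + 1)) + inr (Polynomial.X ^ n) : DualNumber ℤ[X]) ∣
      (inl Polynomial.X + inr (Polynomial.C α)) ^ (n + 1) := by
  rintro ⟨q, hq⟩
  have hfst : fst q = 1 := by
    have := congrArg fst hq
    simp only [fst_pow, fst_add, fst_inl, fst_inr, fst_mul, add_zero] at this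
    exact (left_eq_mul₀ (pow_ne_zero _ Polynomial.X_ne_zero)).mp this
  have hsnd := congrArg snd hq
  simp only [snd_pow, snd_add, snd_inl, snd_inr, TrivSqZeroExt.snd_mul, fst_add, fst_inl, fst_inr,
    zero_add, add_zero, hfst, smul_eq_mul, MulOpposite.smul_eq_mul_unop, MulOpposite.unop_op,
    nsmul_eq_mul, Nat.pred_eq_sub_one, add_tsub_cancel_right] at hsnd
  have hcancel : ((n + 1 : ℕ) : ℤ[X]) * Polynomial.C α = Polynomial.X * snd q + 1 :=
    mul_left_cancel₀ (pow_ne_zero n Polynomial.X_ne_zero) (by linear_combination hsnd)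
  have hconst := congrArg (Polynomial.eval 0) hcancel
  simp only [Polynomial.eval_mul, Polynomial.eval_natCast, Polynomial.eval_C, Polynomial.eval_add,
    Polynomial.eval_X, zero_mul, zero_add, Polynomial.eval_one] at hconst
  have := Int.eq_one_of_mul_eq_one_right (by positivity) hconst
  omega

lemma X_one_pow_mem_span (R : Type*) [CommRing R] {k m : ℕ} (hkm : k ≤ m) (hm : 0 < m) :
    X 1 ^ m ∈ Ideal.span {X 0 ^ k, hh R 2 (m - 1) (fv 2 2)} := by
  obtain ⟨n, rfl⟩ : ∃ n, m = n + 1 := ⟨m - 1, by omega⟩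
  refine Ideal.mem_span_pair.mpr ⟨X 0 ^ (n + 1 - k), X 1 - X 0, ?_⟩
  rw [← pow_add, Nat.sub_add_cancel hkm, Nat.add_sub_cancel]
  linear_combination hh_two_mul_sub R n

/-- for `2 ≤ k ≤ m`, `3 ≤ m`, in `R^{(k,m)} = ℤ[x_1,x_2]/⟨x_1^k, h_{m-1}(x_1,x_2)⟩`,
the element `(x_2 + α x_1)^{m-1}` is nonzero for every integer `α`, while `x_2^m = 0`. -/
theorem stmt17 (k m : ℕ) (hk : 2 ≤ k) (hm : 3 ≤ m) (hkm : k ≤ m)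
    (I : Ideal (MvPolynomial (Fin 2) ℤ))
    (hI : I = Ideal.span {X 0 ^ k, hh ℤ 2 (m - 1) (fv 2 2)}) :
    (∀ α : ℤ, (Ideal.Quotient.mk I (X 1 + C α * X 0)) ^ (m - 1) ≠ 0) ∧
    (Ideal.Quotient.mk I (X 1)) ^ m = 0 := by
  subst hI
  simp only [← map_pow, ne_eq, Ideal.Quotient.eq_zero_iff_mem]
  refine ⟨fun α h => ?_, X_one_pow_mem_span ℤ hkm (by omega)⟩
  obtain ⟨n, rfl⟩ : ∃ n, m = n + 2 := ⟨m - 2, by omega⟩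
  rw [show n + 2 - 1 = n + 1 from rfl] at h
  set φ : MvPolynomial (Fin 2) ℤ →ₐ[ℤ] DualNumber ℤ[X] := aeval ![ε, inl Polynomial.X]
  have hx0 : φ (X 0 ^ k) = 0 := by
    simp [φ, eps_pow_eq_zero ℤ[X] hk]
  have hlin : φ (X 1 + C α * X 0) = inl Polynomial.X + inr (Polynomial.C α) := by
    simp [φ, inr_eq_smul_eps, Algebra.smul_def]
  have hh_img :
      φ (hh ℤ 2 (n + 1) (fv 2 2)) = inl (Polynomial.X ^ (n + 1)) + inr (Polynomial.X ^ n) :=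
    aeval_hh_two_dualNumber ℤ n
  have hmem := Ideal.mem_map_of_mem φ h
  rw [Ideal.map_span, Set.image_pair, hx0, Ideal.span_insert_zero, Ideal.mem_span_singleton,
    map_pow, hlin, hh_img] at hmem
  exact dualNumber_not_dvd_pow (by omega) α hmem
end

section
/- Over a commutative ring A in which 2 is invertible, the ring A[x_1,x_2]/⟨x_1^2, h_2(x_1,x_2)⟩, where h_2(x_1,x_2) = x_2^2 + x_1x_2 + x_1^2, is isomorphic as a graded A-algebra to A[u]/⟨u^2⟩ ⊗_A A[y]/⟨y^2⟩, via completing the square: h_2(x_1,x_2) ≡ (x_2 + (1/2)x_1)^2 + (3/4)x_1^2, so that modulo x_1^2 the ideal equals ⟨x_1^2, (x_2 + (1/2)x_1)^2⟩. -/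
open MvPolynomial Finset

set_option maxHeartbeats 1000000
set_option synthInstance.maxHeartbeats 400000

lemma hh_eq (A : Type*) [CommRing A] : hh A 2 2 (fv 2 2) = X 0^2 + X 0 * X 1 + X 1^2 := by
  have : fv 2 2 = {0, 1} := by decide
  rw [hh, this]
  rw [show ({0,1} : Finset (Fin 2)).sym 2 = {Sym.mk (n := 2) {0,0} rfl, Sym.mk (n := 2) {0,1} rfl, Sym.mk (n := 2) {1,1} rfl} by decide]
  rw [Finset.sum_insert (by decide), Finset.sum_insert (by decide), Finset.sum_singleton]
  simp [Multiset.insert_eq_cons]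
  ring

lemma aux1 {T : Type*} [CommRing T] (u y c : T) (hu : u*u = 0) (hy : y*y = 0)
    (hc : 2*c = 1) : u^2 + u*(y - c*u) + (y - c*u)^2 = 0 := by
  linear_combination (1 - c + c^2)*hu + hy - (u*y)*hc

lemma aux2 {T : Type*} [CommRing T] (a b c : T) (hc : 2*c = 1) :
    (b + c*a)^2 = (a^2 + a*b + b^2) + (c^2 - 1)*a^2 := by
  linear_combination (a*b)*hc

open scoped TensorProduct in
/-- over a commutative ring `A` in which `2` is invertible,
`A[x_1,x_2]/⟨x_1², h_2(x_1,x_2)⟩` is isomorphic as a (graded) `A`-algebra to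
`A[u]/⟨u²⟩ ⊗_A A[y]/⟨y²⟩` via `x_1 ↦ u ⊗ 1`, `x_2 ↦ 1 ⊗ y − ½ (u ⊗ 1)`
(completing the square `y = x_2 + ½ x_1`). -/
theorem stmt18 (A : Type*) [CommRing A] [Invertible (2 : A)]
    (I : Ideal (MvPolynomial (Fin 2) A))
    (hI : I = Ideal.span {X 0 ^ 2, hh A 2 2 (fv 2 2)})
    (P : Ideal (Polynomial A)) (hP : P = Ideal.span {Polynomial.X ^ 2}) :
    ∃ e : (MvPolynomial (Fin 2) A ⧸ I) ≃ₐ[A]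
        ((Polynomial A ⧸ P) ⊗[A] (Polynomial A ⧸ P)),
      e (Ideal.Quotient.mk I (X 0)) = (Ideal.Quotient.mk P Polynomial.X) ⊗ₜ[A] 1 ∧
      e (Ideal.Quotient.mk I (X 1)) =
        (1 : Polynomial A ⧸ P) ⊗ₜ[A] (Ideal.Quotient.mk P Polynomial.X)
          - (⅟(2 : A)) • ((Ideal.Quotient.mk P Polynomial.X) ⊗ₜ[A] 1) := by
  set u : (Polynomial A ⧸ P) ⊗[A] (Polynomial A ⧸ P) :=
    (Ideal.Quotient.mk P Polynomial.X) ⊗ₜ[A] 1 with hudef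
  set y : (Polynomial A ⧸ P) ⊗[A] (Polynomial A ⧸ P) :=
    (1 : Polynomial A ⧸ P) ⊗ₜ[A] (Ideal.Quotient.mk P Polynomial.X) with hydef
  set c : (Polynomial A ⧸ P) ⊗[A] (Polynomial A ⧸ P) :=
    @algebraMap A ((Polynomial A ⧸ P) ⊗[A] (Polynomial A ⧸ P)) _ _ Algebra.TensorProduct.instAlgebra (⅟(2 : A)) with hcdef
  have hcsmul : ∀ t : (Polynomial A ⧸ P) ⊗[A] (Polynomial A ⧸ P),
      (⅟(2 : A)) • t = c * t := fun t => by rw [hcdef]; exact Algebra.smul_def (⅟(2 : A)) t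
  have hc : 2 * c = 1 := by
    rw [hcdef, ← map_ofNat (algebraMap A ((Polynomial A ⧸ P) ⊗[A] (Polynomial A ⧸ P))) 2,
      ← map_mul, mul_invOf_self, map_one]
  have hmkX2 : (Ideal.Quotient.mk P Polynomial.X) ^ 2 = 0 := by
    rw [← map_pow, Ideal.Quotient.eq_zero_iff_mem, hP]
    exact Ideal.subset_span rfl
  have hu2 : u * u = 0 := by
    rw [hudef, Algebra.TensorProduct.tmul_mul_tmul, mul_one, ← pow_two, hmkX2,
      TensorProduct.zero_tmul]
  have hy2 : y * y = 0 := by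
    rw [hydef, Algebra.TensorProduct.tmul_mul_tmul, mul_one, ← pow_two, hmkX2,
      TensorProduct.tmul_zero]
  -- forward map
  set φ : MvPolynomial (Fin 2) A →ₐ[A] ((Polynomial A ⧸ P) ⊗[A] (Polynomial A ⧸ P)) :=
    aeval ![u, y - c * u] with hφdef
  have hφ0 : φ (X 0) = u := by rw [hφdef, aeval_X]; rfl
  have hφ1 : φ (X 1) = y - c * u := by rw [hφdef, aeval_X]; rfl
  have hker : ∀ a ∈ I, φ a = 0 := by
    have hle : Ideal.span {X 0 ^ 2, hh A 2 2 (fv 2 2)} ≤ RingHom.ker φ := by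
      rw [Ideal.span_le]
      rintro p (rfl | rfl)
      · rw [SetLike.mem_coe, RingHom.mem_ker, pow_two, map_mul, hφ0, hu2]
      · rw [SetLike.mem_coe, RingHom.mem_ker, hh_eq, map_add, map_add, map_mul, pow_two, pow_two, map_mul,
          map_mul, hφ0, hφ1]
        simpa only [pow_two] using aux1 u y c hu2 hy2 hc
    exact fun a ha => hle (hI ▸ ha)
  set φbar : (MvPolynomial (Fin 2) A ⧸ I) →ₐ[A] ((Polynomial A ⧸ P) ⊗[A] (Polynomial A ⧸ P)) :=
    Ideal.Quotient.liftₐ I φ hker with hφbardef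
  have hφbar0 : φbar (Ideal.Quotient.mk I (X 0)) = u := by
    rw [hφbardef, Ideal.Quotient.liftₐ_apply]; erw [Ideal.Quotient.lift_mk]; exact hφ0
  have hφbar1 : φbar (Ideal.Quotient.mk I (X 1)) = y - c * u := by
    rw [hφbardef, Ideal.Quotient.liftₐ_apply]; erw [Ideal.Quotient.lift_mk]; exact hφ1
  -- reverse maps
  have hCC : (2 : MvPolynomial (Fin 2) A) * C (⅟(2:A)) = 1 := by
    rw [show (2 : MvPolynomial (Fin 2) A) = C 2 from (map_ofNat _ 2).symm, ← map_mul,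
      mul_invOf_self, map_one]
  have hX02 : (X 0 : MvPolynomial (Fin 2) A) ^ 2 ∈ I := by
    rw [hI]; exact Ideal.subset_span (Or.inl rfl)
  have hq2mem : (X 1 + C (⅟(2:A)) * X 0 : MvPolynomial (Fin 2) A) ^ 2 ∈ I := by
    rw [aux2 (X 0) (X 1) (C (⅟(2:A))) hCC]
    refine Ideal.add_mem I ?_ (Ideal.mul_mem_left I _ hX02)
    rw [hI, ← hh_eq]
    exact Ideal.subset_span (Or.inr rfl)
  have hliftP : ∀ (q : MvPolynomial (Fin 2) A ⧸ I), q ^ 2 = 0 →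
      ∀ a ∈ P, Polynomial.aeval q a = 0 := by
    intro q hq
    have hle : Ideal.span {Polynomial.X ^ 2} ≤ RingHom.ker (Polynomial.aeval q : Polynomial A →ₐ[A] _) := by
      rw [Ideal.span_le]
      rintro p rfl
      rw [SetLike.mem_coe, RingHom.mem_ker, map_pow, Polynomial.aeval_X, hq]
    exact fun a ha => hle (hP ▸ ha)
  set f : (Polynomial A ⧸ P) →ₐ[A] (MvPolynomial (Fin 2) A ⧸ I) :=
    Ideal.Quotient.liftₐ P (Polynomial.aeval (Ideal.Quotient.mk I (X 0)))
      (hliftP _ (by rw [← map_pow, Ideal.Quotient.eq_zero_iff_mem]; exact hX02)) with hfdef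
  set g : (Polynomial A ⧸ P) →ₐ[A] (MvPolynomial (Fin 2) A ⧸ I) :=
    Ideal.Quotient.liftₐ P (Polynomial.aeval (Ideal.Quotient.mk I (X 1 + C (⅟(2:A)) * X 0)))
      (hliftP _ (by rw [← map_pow, Ideal.Quotient.eq_zero_iff_mem]; exact hq2mem)) with hgdef
  have hfX : f (Ideal.Quotient.mk P Polynomial.X) = Ideal.Quotient.mk I (X 0) := by
    rw [hfdef, Ideal.Quotient.liftₐ_apply]; erw [Ideal.Quotient.lift_mk]
    exact Polynomial.aeval_X _
  have hgX : g (Ideal.Quotient.mk P Polynomial.X)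
      = Ideal.Quotient.mk I (X 1 + C (⅟(2:A)) * X 0) := by
    rw [hgdef, Ideal.Quotient.liftₐ_apply]; erw [Ideal.Quotient.lift_mk]
    exact Polynomial.aeval_X _
  set ψ : ((Polynomial A ⧸ P) ⊗[A] (Polynomial A ⧸ P)) →ₐ[A] (MvPolynomial (Fin 2) A ⧸ I) :=
    Algebra.TensorProduct.lift f g (fun x y' => Commute.all _ _) with hψdef
  have hψu : ψ u = Ideal.Quotient.mk I (X 0) := by
    rw [hudef, hψdef, Algebra.TensorProduct.lift_tmul, map_one, mul_one, hfX]
  have hψy : ψ y = Ideal.Quotient.mk I (X 1 + C (⅟(2:A)) * X 0) := by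
    rw [hydef, hψdef, Algebra.TensorProduct.lift_tmul, map_one, one_mul, hgX]
  have hcQ : ∀ t : MvPolynomial (Fin 2) A ⧸ I, ψ c * t = ⅟(2:A) • t := by
    intro t
    rw [hcdef, AlgHom.commutes]
    exact (Algebra.smul_def (⅟(2 : A)) t).symm
  -- composition 1 : ψ ∘ φbar = id
  have comp1 : ψ.comp φbar = AlgHom.id A _ := by
    apply Ideal.Quotient.algHom_ext
    apply MvPolynomial.algHom_ext
    intro i
    fin_cases i
    · show ψ (φbar (Ideal.Quotient.mk I (X 0))) = Ideal.Quotient.mk I (X 0)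
      rw [hφbar0, hψu]
    · show ψ (φbar (Ideal.Quotient.mk I (X 1))) = Ideal.Quotient.mk I (X 1)
      rw [hφbar1, map_sub, map_mul, hψy, hψu, hcQ, map_add, map_mul]
      have haux : (Ideal.Quotient.mk I) (C (⅟(2:A))) * (Ideal.Quotient.mk I) (X 0)
          = ⅟(2:A) • (Ideal.Quotient.mk I) (X 0) :=
        (Algebra.smul_def (⅟(2:A)) ((Ideal.Quotient.mk I) (X 0))).symm
      rw [haux]
      abel
  -- composition 2 : φbar ∘ ψ = id
  have comp2 : φbar.comp ψ = AlgHom.id A _ := by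
    apply Algebra.TensorProduct.ext
    · apply Ideal.Quotient.algHom_ext
      apply Polynomial.algHom_ext
      show φbar (ψ u) = u
      rw [hψu, hφbar0]
    · apply Ideal.Quotient.algHom_ext
      apply Polynomial.algHom_ext
      show φbar (ψ y) = y
      have haux : φbar ((Ideal.Quotient.mk I) (C (⅟(2:A)))) = c := by
        rw [hcdef]
        exact φbar.commutes (⅟(2:A))
      rw [hψy, map_add, map_mul, map_add, map_mul, hφbar1, haux, hφbar0]
      ring
  refine ⟨AlgEquiv.ofAlgHom φbar ψ comp2 comp1, ?_, ?_⟩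
  · show φbar (Ideal.Quotient.mk I (X 0)) = u
    exact hφbar0
  · show φbar (Ideal.Quotient.mk I (X 1)) = y - ⅟(2:A) • u
    rw [hφbar1, hcsmul]
end

section
/- The ring Z[x_1,x_2]/⟨x_1^2, x_1^2 + x_1x_2 + x_2^2⟩ (equivalently Z[x_1,x_2]/⟨x_1^2, x_1x_2 + x_2^2⟩) admits no nontrivial tensor decomposition over Z: it cannot be written as T ⊗_Z T' with T, T' standard graded Z-algebras both different from Z. -/
/-!
Write the images of the generators `x₀, x₁` in `T ⊗ T'` as `aᵢ ⊗ 1 + 1 ⊗ bᵢ` with `aᵢ ∈ T₁`, `bᵢ ∈ T'₁`.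
The `T₁ ⊗ T'₁`-components of the relations `x₀² = 0` and `x₀x₁ + x₁² = 0` are
`2 a₀ ⊗ b₀ = 0` and `a₀ ⊗ b₁ + a₁ ⊗ b₀ + 2 a₁ ⊗ b₁ = 0`. Everything being torsion free,
`a₀ = 0` or `b₀ = 0`, and then `a₁ ⊗ (b₀ + 2 b₁) = 0`, resp. `(a₀ + 2 a₁) ⊗ b₁ = 0`.
Since the `(aᵢ, bᵢ)` span `T₁ × T'₁`, in the case `a₀ = 0`, `b₀ = -2 b₁`, `a₁ ≠ 0` writing
`(0, b₁) = m (0, b₀) + n (a₁, b₁)` forces `n = 0` and `(2m + 1) b₁ = 0`, so `b₁ = 0` and `T'₁ = 0`.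
-/

open MvPolynomial Finset

open scoped TensorProduct

theorem TensorProduct.tmul_eq_zero_iff {R M N : Type*} [CommRing R] [IsDomain R]
    [AddCommGroup M] [Module R M] [AddCommGroup N] [Module R N]
    [Module.IsTorsionFree R M] [Module.Flat R N] {a : M} {b : N} :
    a ⊗ₜ[R] b = 0 ↔ a = 0 ∨ b = 0 := by
  refine ⟨fun h => or_iff_not_imp_left.2 fun ha => ?_, by rintro (rfl | rfl) <;> simp⟩
  have hinj : Function.Injective ((LinearMap.toSpanSingleton R M a).rTensor N) :=
    Module.Flat.rTensor_preserves_injective_linearMap _ (smul_left_injective R ha)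
  have h1b : (1 : R) ⊗ₜ[R] b = 0 := hinj (by simpa using h)
  simpa using congrArg (TensorProduct.lid R N) h1b

theorem Module.Free.of_decomposition {ι R M : Type*} [DecidableEq ι] [Semiring R]
    [AddCommMonoid M] [Module R M] (𝒜 : ι → Submodule R M) [DirectSum.Decomposition 𝒜]
    (h : ∀ i, Module.Free R (𝒜 i)) : Module.Free R M :=
  have := h
  Module.Free.of_equiv (DirectSum.decomposeLinearEquiv 𝒜).symm

theorem Submodule.le_span_of_span_image_eq {R M M' : Type*} [Ring R] [AddCommGroup M]
    [Module R M] [AddCommGroup M'] [Module R M'] {f : M →ₗ[R] M'} {S : Submodule R M}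
    {s : Set M} (hs : s ⊆ S) (hf : Disjoint S (LinearMap.ker f))
    (h : span R (f '' s) = S.map f) : S ≤ span R s := by
  intro y hy
  obtain ⟨z, hz, hzy⟩ : f y ∈ (span R s).map f := by
    rw [map_span, h]; exact mem_map_of_mem hy
  have hzy' : z - y = 0 := disjoint_def.1 hf _ (sub_mem (span_le.2 hs hz) hy) (by simp [hzy])
  rwa [← sub_eq_zero.1 hzy']

namespace GradedAlgebra

variable {R A : Type*} [CommRing R] [Ring A] [Algebra R A] {𝒜 : ℕ → Submodule R A}
  [GradedAlgebra 𝒜] {i j : ℕ} {a : A}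

theorem proj_of_mem (ha : a ∈ 𝒜 i) : proj 𝒜 i a = a := by
  rw [proj_apply, DirectSum.decompose_of_mem_same 𝒜 ha]

theorem proj_of_mem_of_ne (ha : a ∈ 𝒜 i) (hij : i ≠ j) : proj 𝒜 j a = 0 := by
  rw [proj_apply, DirectSum.decompose_of_mem_ne 𝒜 ha hij]

end GradedAlgebra

section TensorProductOfGraded

open GradedAlgebra

variable {R A B : Type*} [CommRing R] [Ring A] [Ring B] [Algebra R A] [Algebra R B]
  {𝒜 : ℕ → Submodule R A} {ℬ : ℕ → Submodule R B} [GradedAlgebra 𝒜] [GradedAlgebra ℬ]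

variable (R A B) in
def tmulOneAddOneTmul : A × B →ₗ[R] A ⊗[R] B :=
  (Algebra.TensorProduct.includeLeft (S := R)).toLinearMap.coprod
    Algebra.TensorProduct.includeRight.toLinearMap

@[simp]
theorem tmulOneAddOneTmul_apply (p : A × B) :
    tmulOneAddOneTmul R A B p = p.1 ⊗ₜ 1 + 1 ⊗ₜ p.2 := rfl

theorem disjoint_prod_ker_tmulOneAddOneTmul [IsDomain R] [Module.IsTorsionFree R A]
    [Module.Flat R B] [Nontrivial A] [Nontrivial B] :
    Disjoint ((𝒜 1).prod (ℬ 1)) (LinearMap.ker (tmulOneAddOneTmul R A B)) := by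
  rw [Submodule.disjoint_def]
  rintro ⟨a, b⟩ ⟨ha, hb⟩ hab
  rw [LinearMap.mem_ker, tmulOneAddOneTmul_apply] at hab
  have ha0 := congrArg (TensorProduct.map (proj 𝒜 1) (proj ℬ 0)) hab
  have hb0 := congrArg (TensorProduct.map (proj 𝒜 0) (proj ℬ 1)) hab
  simp [proj_of_mem ha, proj_of_mem hb, proj_of_mem_of_ne ha one_ne_zero,
    proj_of_mem_of_ne hb one_ne_zero, proj_of_mem (𝒜 := 𝒜) SetLike.GradedOne.one_mem,
    proj_of_mem (𝒜 := ℬ) SetLike.GradedOne.one_mem, TensorProduct.tmul_eq_zero_iff] at ha0 hb0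
  simp [ha0, hb0]

theorem map_proj_tmulOneAddOneTmul_mul {p q : A × B}
    (hp : p ∈ (𝒜 1).prod (ℬ 1)) (hq : q ∈ (𝒜 1).prod (ℬ 1)) :
    TensorProduct.map (proj 𝒜 1) (proj ℬ 1)
        (tmulOneAddOneTmul R A B p * tmulOneAddOneTmul R A B q) =
      p.1 ⊗ₜ q.2 + q.1 ⊗ₜ p.2 := by
  have h2 : (1 + 1 : ℕ) ≠ 1 := by norm_num
  simp [add_mul, mul_add, proj_of_mem hp.1, proj_of_mem hp.2, proj_of_mem hq.1,
    proj_of_mem hq.2, proj_of_mem_of_ne (SetLike.mul_mem_graded hp.1 hq.1) h2,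
    proj_of_mem_of_ne (SetLike.mul_mem_graded hp.2 hq.2) h2, add_comm]

end TensorProductOfGraded

section SpanPair

variable {M N : Type*} [AddCommGroup M] [AddCommGroup N] {P : Submodule ℤ M}
  {Q : Submodule ℤ N}

theorem eq_bot_or_eq_bot_of_prod_le_span_pair [Module.IsTorsionFree ℤ M]
    [Module.IsTorsionFree ℤ N] {a : M} {b b' : N}
    (hspan : P.prod Q ≤ Submodule.span ℤ {(0, b'), (a, b)}) (hb : b ∈ Q)
    (h : a = 0 ∨ b' + 2 • b = 0) : P = ⊥ ∨ Q = ⊥ := by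
  have hP : P ≤ Submodule.span ℤ {0, a} := fun x hx => by
    simpa [Submodule.map_span, Set.image_pair] using
      Submodule.mem_map_of_mem (f := LinearMap.fst ℤ M N) (hspan (x := (x, 0)) ⟨hx, Q.zero_mem⟩)
  have hQ : Q ≤ Submodule.span ℤ {b', b} := fun y hy => by
    simpa [Submodule.map_span, Set.image_pair] using
      Submodule.mem_map_of_mem (f := LinearMap.snd ℤ M N) (hspan (x := (0, y)) ⟨P.zero_mem, hy⟩)
  by_cases ha : a = 0
  · left; simpa [ha] using hP
  right
  have hb' : b' = -(2 • b) := eq_neg_of_add_eq_zero_left (h.resolve_left ha)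
  obtain ⟨m, n, hmn⟩ := Submodule.mem_span_pair.1 (hspan (x := (0, b)) ⟨P.zero_mem, hb⟩)
  have hn : n = 0 := by simpa [ha] using congrArg Prod.fst hmn
  have hb0 : b = 0 := by
    have hb_eq : -(m • 2 • b) = b := by simpa [hn, hb'] using congrArg Prod.snd hmn
    have : (2 * m + 1) • b = 0 := by linear_combination (norm := module) -hb_eq
    exact (smul_eq_zero.1 this).resolve_left (by omega)
  simpa [hb0, hb'] using hQ

theorem eq_bot_or_eq_bot_of_tmul_relations [Module.Flat ℤ M] [Module.Flat ℤ N]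
    {a₀ a₁ : M} {b₀ b₁ : N} (hspan : P.prod Q ≤ Submodule.span ℤ {(a₀, b₀), (a₁, b₁)})
    (ha₁ : a₁ ∈ P) (hb₁ : b₁ ∈ Q) (h₀ : a₀ ⊗ₜ[ℤ] b₀ + a₀ ⊗ₜ[ℤ] b₀ = 0)
    (h₁ : a₀ ⊗ₜ[ℤ] b₁ + a₁ ⊗ₜ[ℤ] b₀ + (a₁ ⊗ₜ[ℤ] b₁ + a₁ ⊗ₜ[ℤ] b₁) = 0) :
    P = ⊥ ∨ Q = ⊥ := by
  have h₀' : ((2 : ℤ) • a₀) ⊗ₜ[ℤ] b₀ = 0 := by rwa [two_smul, TensorProduct.add_tmul]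
  rcases TensorProduct.tmul_eq_zero_iff.1 h₀' with ha₀ | rfl
  · obtain rfl : a₀ = 0 := (smul_eq_zero.1 ha₀).resolve_left two_ne_zero
    refine eq_bot_or_eq_bot_of_prod_le_span_pair hspan hb₁
      ((TensorProduct.tmul_eq_zero_iff (R := ℤ)).1 ?_)
    simpa [TensorProduct.tmul_add, two_smul] using h₁
  · have hswap : Q.prod P ≤ Submodule.span ℤ {(0, a₀), (b₁, a₁)} := fun x hx => by
      simpa [Submodule.map_span, Set.image_pair] using Submodule.mem_map_of_mem
        (f := (LinearEquiv.prodComm ℤ M N).toLinearMap) (hspan (x := x.swap) ⟨hx.2, hx.1⟩)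
    refine (eq_bot_or_eq_bot_of_prod_le_span_pair hswap ha₁ ?_).symm
    refine ((TensorProduct.tmul_eq_zero_iff (R := ℤ)).1 ?_).symm
    simpa [TensorProduct.add_tmul, two_smul, add_assoc] using h₁

end SpanPair

theorem mk_X_relations {I : Ideal (MvPolynomial (Fin 2) ℤ)}
    (hI : I = Ideal.span {X 0 ^ 2, X 0 ^ 2 + X 0 * X 1 + X 1 ^ 2}) :
    Ideal.Quotient.mk I (X 0) * Ideal.Quotient.mk I (X 0) = 0 ∧
      Ideal.Quotient.mk I (X 0) * Ideal.Quotient.mk I (X 1) +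
        Ideal.Quotient.mk I (X 1) * Ideal.Quotient.mk I (X 1) = 0 := by
  simp only [← map_mul, ← map_add, Ideal.Quotient.eq_zero_iff_mem, hI, Ideal.mem_span_pair]
  exact ⟨⟨1, 0, by ring⟩, ⟨-1, 1, by ring⟩⟩

open scoped TensorProduct in
theorem stmt19_general (T T' : Type*) [CommRing T] [CommRing T']
    (𝒜 : ℕ → Submodule ℤ T) (ℬ : ℕ → Submodule ℤ T')
    [GradedAlgebra 𝒜] [GradedAlgebra ℬ]
    (hfA : ∀ d, Module.Free ℤ (𝒜 d)) (hfB : ∀ d, Module.Free ℤ (ℬ d))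
    (I : Ideal (MvPolynomial (Fin 2) ℤ))
    (hI : I = Ideal.span {X 0 ^ 2, X 0 ^ 2 + X 0 * X 1 + X 1 ^ 2})
    (e : (MvPolynomial (Fin 2) ℤ ⧸ I) ≃ₐ[ℤ] T ⊗[ℤ] T')
    (hgr : Submodule.span ℤ
        {e (Ideal.Quotient.mk I (X 0)), e (Ideal.Quotient.mk I (X 1))} =
      Submodule.map (Algebra.TensorProduct.includeLeft (R := ℤ) (A := T) (B := T')
          (S := ℤ)).toLinearMap (𝒜 1) ⊔
      Submodule.map (Algebra.TensorProduct.includeRight (R := ℤ) (A := T)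
          (B := T')).toLinearMap (ℬ 1)) :
    𝒜 1 = ⊥ ∨ ℬ 1 = ⊥ := by
  rcases subsingleton_or_nontrivial T with hT | hT
  · exact Or.inl Submodule.eq_bot_of_subsingleton
  rcases subsingleton_or_nontrivial T' with hT' | hT'
  · exact Or.inr Submodule.eq_bot_of_subsingleton
  have := Module.Free.of_decomposition 𝒜 hfA
  have := Module.Free.of_decomposition ℬ hfB
  rw [← LinearMap.map_coprod_prod] at hgr
  obtain ⟨p₀, hp₀, hx₀⟩ : e (Ideal.Quotient.mk I (X 0)) ∈
      ((𝒜 1).prod (ℬ 1)).map (tmulOneAddOneTmul ℤ T T') :=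
    hgr ▸ Submodule.subset_span (by simp)
  obtain ⟨p₁, hp₁, hx₁⟩ : e (Ideal.Quotient.mk I (X 1)) ∈
      ((𝒜 1).prod (ℬ 1)).map (tmulOneAddOneTmul ℤ T T') :=
    hgr ▸ Submodule.subset_span (by simp)
  have hspan : (𝒜 1).prod (ℬ 1) ≤ Submodule.span ℤ {p₀, p₁} :=
    Submodule.le_span_of_span_image_eq (Set.pair_subset hp₀ hp₁)
      disjoint_prod_ker_tmulOneAddOneTmul (by rw [Set.image_pair, hx₀, hx₁]; exact hgr)
  obtain ⟨r₀, r₁⟩ := mk_X_relations hI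
  apply_fun TensorProduct.map (GradedAlgebra.proj 𝒜 1) (GradedAlgebra.proj ℬ 1) ∘ e at r₀ r₁
  simp only [Function.comp_apply, map_mul, map_add, map_zero, ← hx₀, ← hx₁,
    map_proj_tmulOneAddOneTmul_mul hp₀ hp₀, map_proj_tmulOneAddOneTmul_mul hp₀ hp₁,
    map_proj_tmulOneAddOneTmul_mul hp₁ hp₁] at r₀ r₁
  exact eq_bot_or_eq_bot_of_tmul_relations hspan hp₁.1 hp₁.2 r₀ r₁

open scoped TensorProduct in
/-- `R^{(2,3)} = ℤ[x_1,x_2]/⟨x_1², x_1² + x_1x_2 + x_2²⟩` admits no nontrivial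
tensor decomposition over `ℤ`: if `T, T'` are standard graded ℤ-algebras (gradings `𝒜, ℬ`
with free graded pieces, degree-0 part `ℤ`, generated in degree 1) and `e` is a graded
ℤ-algebra isomorphism `R^{(2,3)} ≅ T ⊗_ℤ T'` — gradedness encoded by `e` carrying the
degree-1 part `span{x_1, x_2}` onto the degree-1 part `T_1 ⊗ 1 ⊕ 1 ⊗ T'_1` — then one of
the factors is trivial (`T_1 = 0` or `T'_1 = 0`, i.e. `T = ℤ` or `T' = ℤ`). -/
theorem stmt19 (T T' : Type*) [CommRing T] [CommRing T']
    (𝒜 : ℕ → Submodule ℤ T) (ℬ : ℕ → Submodule ℤ T')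
    [GradedAlgebra 𝒜] [GradedAlgebra ℬ]
    (hfA : ∀ d, Module.Free ℤ (𝒜 d)) (hfB : ∀ d, Module.Free ℤ (ℬ d))
    (h0A : 𝒜 0 = (1 : Submodule ℤ T)) (h0B : ℬ 0 = (1 : Submodule ℤ T'))
    (hgA : Algebra.adjoin ℤ ((𝒜 1 : Submodule ℤ T) : Set T) = ⊤)
    (hgB : Algebra.adjoin ℤ ((ℬ 1 : Submodule ℤ T') : Set T') = ⊤)
    (I : Ideal (MvPolynomial (Fin 2) ℤ))
    (hI : I = Ideal.span {X 0 ^ 2, X 0 ^ 2 + X 0 * X 1 + X 1 ^ 2})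
    (e : (MvPolynomial (Fin 2) ℤ ⧸ I) ≃ₐ[ℤ] T ⊗[ℤ] T')
    (hgr : Submodule.span ℤ
        {e (Ideal.Quotient.mk I (X 0)), e (Ideal.Quotient.mk I (X 1))} =
      Submodule.map (Algebra.TensorProduct.includeLeft (R := ℤ) (A := T) (B := T')
          (S := ℤ)).toLinearMap (𝒜 1) ⊔
      Submodule.map (Algebra.TensorProduct.includeRight (R := ℤ) (A := T)
          (B := T')).toLinearMap (ℬ 1)) :
    𝒜 1 = ⊥ ∨ ℬ 1 = ⊥ :=
  stmt19_general T T' 𝒜 ℬ hfA hfB I hI e hgr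
end
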